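/- arXiv:0710.4472 — 3 statements merged into one kernel-verified Lean document; each statement's English description precedes it below -/
import Mathlib

section
/- In the Viana–Bray model, let H′_N(σ) = −Σ_{ν=1}^{P_α} J′_ν σ_{i′_ν} σ_{j′_ν} be an independent copy of the Hamiltonian in which the Poisson variable P_α has mean α, with {i′_ν}, {j′_ν} i.i.d. uniform on {1,…,N} and {J′_ν} i.i.d. symmetric signs, all independent of the quenched variables appearing in Ω. Then E ln Ω(exp(−β H′_N(σ))) = N A_N(α(1+1/N)) − N A_N(α). -/
noncomputable section

/-- The real value of a Boolean spin: `true ↦ 1`, `false ↦ -1`. -/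
def spin (b : Bool) : ℝ := if b then 1 else -1

/-- Minus `β` times the Viana–Bray Hamiltonian with `p` interaction terms:
`-β H = β ∑_{ν<p} J_ν σ_{i_ν} σ_{j_ν}`. -/
def negBetaH (N p : ℕ) (β : ℝ) (i j : Fin p → Fin N) (J : Fin p → Bool)
    (σ : Fin N → Bool) : ℝ :=
  β * ∑ ν : Fin p, spin (J ν) * spin (σ (i ν)) * spin (σ (j ν))

/-- The partition function `Z = ∑_σ exp (-β H(σ))`. -/
def partitionZ (N p : ℕ) (β : ℝ) (i j : Fin p → Fin N) (J : Fin p → Bool) : ℝ :=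
  ∑ σ : Fin N → Bool, Real.exp (negBetaH N p β i j J σ)

/-- Quenched expectation over the interaction randomness: the number `p` of interaction
terms is Poisson of mean `lam`, and the index families `i, j : Fin p → Fin N` and sign
family `J : Fin p → Bool` are i.i.d. uniform. -/
def quenchedAvg (N : ℕ) (lam : ℝ)
    (g : (p : ℕ) → (Fin p → Fin N) → (Fin p → Fin N) → (Fin p → Bool) → ℝ) : ℝ :=
  ∑' p : ℕ, (Real.exp (-lam) * lam ^ p / (Nat.factorial p : ℝ)) *
    ((∑ i : Fin p → Fin N, ∑ j : Fin p → Fin N, ∑ J : Fin p → Bool, g p i j J) /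
      ((N : ℝ) ^ p * (N : ℝ) ^ p * 2 ^ p))

/-- The quenched pressure `A_N(α) = (1/N) E ln Z` of the Viana–Bray model with Poisson
mean `α N`. -/
def pressure (N : ℕ) (β α : ℝ) : ℝ :=
  quenchedAvg N (α * N) fun p i j J => (1 / (N : ℝ)) * Real.log (partitionZ N p β i j J)

namespace CavityAux
open Finset

/-! ### Poisson weights -/

/-- Poisson weight. -/
def w (l : ℝ) (p : ℕ) : ℝ := Real.exp (-l) * l ^ p / (Nat.factorial p : ℝ)

lemma fact_pos (p : ℕ) : (0:ℝ) < (Nat.factorial p : ℝ) := by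
  exact_mod_cast Nat.factorial_pos p

lemma w_nonneg {l : ℝ} (hl : 0 ≤ l) (p : ℕ) : 0 ≤ w l p := by
  unfold w; positivity

lemma exp_eq_tsum (x : ℝ) : Real.exp x = ∑' n : ℕ, x ^ n / (Nat.factorial n : ℝ) := by
  rw [Real.exp_eq_exp_ℝ, NormedSpace.exp_eq_tsum_div]

lemma tsum_w_mul_pow (l c : ℝ) : ∑' p, w l p * c ^ p = Real.exp (-l) * Real.exp (l * c) := by
  have : ∀ p, w l p * c ^ p = Real.exp (-l) * ((l*c) ^ p / (Nat.factorial p : ℝ)) := by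
    intro p; unfold w; rw [mul_pow]; ring
  simp only [this]
  rw [tsum_mul_left, ← exp_eq_tsum]

lemma tsum_w {l : ℝ} : ∑' p, w l p = 1 := by
  have h := tsum_w_mul_pow l 1
  simp only [one_pow, mul_one] at h
  rw [← Real.exp_add] at h; simpa using h

lemma summable_w_mul_pow (l c : ℝ) : Summable (fun p => w l p * c ^ p) := by
  have : ∀ p, w l p * c ^ p = (Real.exp (-l)) * ((l*c) ^ p / (Nat.factorial p : ℝ)) := by
    intro p; unfold w; rw [mul_pow]; ring
  simp only [this]
  exact (Real.summable_pow_div_factorial (l*c)).mul_left _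

lemma summable_w (l : ℝ) : Summable (w l) := by
  have := summable_w_mul_pow l 1
  simpa using this

/-- Summability of weighted sequences bounded by `C * 2^n`. -/
lemma summable_w_mul {l : ℝ} (hl : 0 ≤ l) {F : ℕ → ℝ} {C : ℝ}
    (hF : ∀ n, |F n| ≤ C * 2 ^ n) : Summable (fun p => w l p * F p) := by
  have hsum : Summable (fun p => w l p * (C * 2 ^ p)) := by
    have : ∀ p, w l p * (C * 2 ^ p) = C * (w l p * 2 ^ p) := fun p => by ring
    simp only [this]
    exact (summable_w_mul_pow l 2).mul_left _
  apply Summable.of_abs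
  refine Summable.of_nonneg_of_le (fun p => abs_nonneg _) (fun p => ?_) hsum
  rw [abs_mul, abs_of_nonneg (w_nonneg hl p)]
  exact mul_le_mul_of_nonneg_left (hF p) (w_nonneg hl p)

/-- linear growth is dominated by `2^n`. -/
lemma linear_le_two_pow {a b : ℝ} (ha : 0 ≤ a) (hb : 0 ≤ b) (n : ℕ) :
    a + b * n ≤ (a + b) * 2 ^ n := by
  have h2 : (1:ℝ) ≤ 2 ^ n := one_le_pow₀ (by norm_num)
  have hn : (n:ℝ) ≤ 2 ^ n := by
    exact_mod_cast (Nat.lt_two_pow_self (n := n)).le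
  nlinarith

/-- Binomial identity for factorial-normalized sums. -/
lemma binom_div (x y : ℝ) (n : ℕ) :
    ∑ kl ∈ antidiagonal n, x ^ kl.1 * y ^ kl.2 / ((Nat.factorial kl.1 : ℝ) * (Nat.factorial kl.2 : ℝ))
      = (x + y) ^ n / (Nat.factorial n : ℝ) := by
  rw [Finset.Nat.sum_antidiagonal_eq_sum_range_succ_mk, add_pow, Finset.sum_div]
  refine Finset.sum_congr rfl fun k hk => ?_
  have hkn : k ≤ n := Nat.lt_succ_iff.mp (Finset.mem_range.mp hk)
  rw [Nat.cast_choose ℝ hkn]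
  have h1 : (Nat.factorial k : ℝ) ≠ 0 := (fact_pos k).ne'
  have h2 : (Nat.factorial (n-k) : ℝ) ≠ 0 := (fact_pos (n-k)).ne'
  have h3 : (Nat.factorial n : ℝ) ≠ 0 := (fact_pos n).ne'
  field_simp

/-- Poisson convolution on the antidiagonal. -/
lemma w_conv (a b : ℝ) (n : ℕ) :
    ∑ kl ∈ antidiagonal n, w a kl.1 * w b kl.2 = w (a+b) n := by
  have : ∀ kl : ℕ × ℕ, w a kl.1 * w b kl.2
      = (Real.exp (-a) * Real.exp (-b)) * (a ^ kl.1 * b ^ kl.2 / ((Nat.factorial kl.1 : ℝ) * (Nat.factorial kl.2 : ℝ))) := by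
    intro kl; unfold w; ring
  simp only [this]
  rw [← Finset.mul_sum, binom_div]
  unfold w
  rw [← Real.exp_add]
  ring_nf

lemma summable_prod_w {a b : ℝ} (ha : 0 ≤ a) (hb : 0 ≤ b) {F : ℕ → ℝ} {C : ℝ}
    (hF : ∀ n, |F n| ≤ C * 2 ^ n) :
    Summable (fun x : ℕ × ℕ => w a x.1 * w b x.2 * F (x.1 + x.2)) := by
  have hbd : Summable (fun x : ℕ × ℕ => (w a x.1 * 2 ^ x.1) * (C * (w b x.2 * 2 ^ x.2))) := by
    apply Summable.mul_of_nonneg (summable_w_mul_pow a 2)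
      ((summable_w_mul_pow b 2).mul_left C)
    · intro p; have := w_nonneg ha p; positivity
    · intro q
      have hC : 0 ≤ C := by
        have h := (abs_nonneg (F 0)).trans (hF 0); simpa using h
      have := w_nonneg hb q; positivity
  apply Summable.of_abs
  refine Summable.of_nonneg_of_le (fun x => abs_nonneg _) (fun x => ?_) hbd
  obtain ⟨p, q⟩ := x
  have h1 : |w a p * w b q * F (p+q)| = w a p * w b q * |F (p+q)| := by
    rw [abs_mul, abs_mul, abs_of_nonneg (w_nonneg ha p), abs_of_nonneg (w_nonneg hb q)]
  rw [h1]
  have h3 : w a p * w b q * |F (p+q)| ≤ w a p * w b q * (C * 2 ^ (p+q)) := by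
    apply mul_le_mul_of_nonneg_left (hF _)
    exact mul_nonneg (w_nonneg ha p) (w_nonneg hb q)
  refine h3.trans (le_of_eq ?_)
  rw [pow_add]; ring

/-- Poisson superposition: averaging with weights `w a` and `w b` over the sum of the
two Poisson numbers is the same as averaging with weight `w (a+b)`. -/
lemma poisson_superposition {a b : ℝ} (ha : 0 ≤ a) (hb : 0 ≤ b) {F : ℕ → ℝ} {C : ℝ}
    (hF : ∀ n, |F n| ≤ C * 2 ^ n) :
    ∑' p : ℕ, w a p * ∑' q : ℕ, w b q * F (p + q) = ∑' n : ℕ, w (a+b) n * F n := by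
  set f : ℕ × ℕ → ℝ := fun x => w a x.1 * w b x.2 * F (x.1 + x.2) with hf
  have hsum : Summable f := summable_prod_w ha hb hF
  have step1 : ∑' p : ℕ, w a p * ∑' q : ℕ, w b q * F (p + q) = ∑' p : ℕ, ∑' q : ℕ, f (p, q) := by
    refine tsum_congr fun p => ?_
    rw [← tsum_mul_left]
    exact tsum_congr fun q => by simp [hf, mul_assoc]
  rw [step1, ← Summable.tsum_prod' hsum (fun p => hsum.prod_factor p)]
  rw [← Finset.HasAntidiagonal.sigmaAntidiagonalEquivProd.tsum_eq f]
  have hsig : Summable (fun y : Σ n : ℕ, antidiagonal n => f (Finset.HasAntidiagonal.sigmaAntidiagonalEquivProd y)) :=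
    Finset.HasAntidiagonal.sigmaAntidiagonalEquivProd.summable_iff.mpr hsum
  rw [Summable.tsum_sigma' (fun n => (hasSum_fintype _).summable) hsig]
  refine tsum_congr fun n => ?_
  have h1 : ∑' (c : antidiagonal n), f (Finset.HasAntidiagonal.sigmaAntidiagonalEquivProd ⟨n, c⟩)
      = ∑ kl ∈ antidiagonal n, f kl := by
    rw [tsum_fintype]
    exact Finset.sum_finset_coe (f := f) _
  rw [h1]
  have h2 : ∑ kl ∈ antidiagonal n, f kl = ∑ kl ∈ antidiagonal n, (w a kl.1 * w b kl.2) * F n := by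
    refine Finset.sum_congr rfl fun kl hkl => ?_
    rw [Finset.HasAntidiagonal.mem_antidiagonal] at hkl
    simp [hf, hkl]
  rw [h2, ← Finset.sum_mul, w_conv]

/-! ### Bounds on the model -/

lemma abs_spin (b : Bool) : |spin b| = 1 := by cases b <;> simp [spin]

lemma abs_negBetaH_le {N p : ℕ} {β : ℝ} (hβ : 0 ≤ β) (i j : Fin p → Fin N)
    (J : Fin p → Bool) (σ : Fin N → Bool) : |negBetaH N p β i j J σ| ≤ β * p := by
  unfold negBetaH
  rw [abs_mul, abs_of_nonneg hβ]
  refine mul_le_mul_of_nonneg_left ?_ hβ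
  calc |∑ ν : Fin p, spin (J ν) * spin (σ (i ν)) * spin (σ (j ν))|
      ≤ ∑ ν : Fin p, |spin (J ν) * spin (σ (i ν)) * spin (σ (j ν))| :=
        Finset.abs_sum_le_sum_abs _ _
    _ = ∑ ν : Fin p, 1 := by
        refine Finset.sum_congr rfl fun ν _ => ?_
        rw [abs_mul, abs_mul, abs_spin, abs_spin, abs_spin]; norm_num
    _ = (p : ℝ) := by simp

lemma Z_pos (N p : ℕ) (β : ℝ) (i j : Fin p → Fin N) (J : Fin p → Bool) :
    0 < partitionZ N p β i j J := by
  unfold partitionZ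
  apply Finset.sum_pos (fun σ _ => Real.exp_pos _)
  exact Finset.univ_nonempty

lemma abs_log_Z_le {N p : ℕ} {β : ℝ} (hβ : 0 ≤ β) (i j : Fin p → Fin N)
    (J : Fin p → Bool) :
    |Real.log (partitionZ N p β i j J)| ≤ N * Real.log 2 + β * p := by
  have hcard : (Fintype.card (Fin N → Bool) : ℝ) = 2 ^ N := by
    simp [Fintype.card_fun]
  have hub : partitionZ N p β i j J ≤ 2 ^ N * Real.exp (β * p) := by
    unfold partitionZ
    calc ∑ σ : Fin N → Bool, Real.exp (negBetaH N p β i j J σ)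
        ≤ ∑ _σ : Fin N → Bool, Real.exp (β * p) := by
          refine Finset.sum_le_sum fun σ _ => Real.exp_le_exp.mpr ?_
          exact (le_abs_self _).trans (abs_negBetaH_le hβ i j J σ)
      _ = 2 ^ N * Real.exp (β * p) := by
          rw [Finset.sum_const, nsmul_eq_mul]; rw [Finset.card_univ, hcard]
  have hlb : 2 ^ N * Real.exp (-(β * p)) ≤ partitionZ N p β i j J := by
    unfold partitionZ
    calc (2:ℝ) ^ N * Real.exp (-(β * p)) = ∑ _σ : Fin N → Bool, Real.exp (-(β * p)) := by
          rw [Finset.sum_const, nsmul_eq_mul, Finset.card_univ, hcard]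
      _ ≤ ∑ σ : Fin N → Bool, Real.exp (negBetaH N p β i j J σ) := by
          refine Finset.sum_le_sum fun σ _ => Real.exp_le_exp.mpr ?_
          linarith [abs_le.mp (abs_negBetaH_le hβ i j J σ)]
  rw [abs_le]
  have hZ := Z_pos N p β i j J
  have hl2 : 0 ≤ (N:ℝ) * Real.log 2 := by positivity
  constructor
  · have : Real.log (2 ^ N * Real.exp (-(β * p))) ≤ Real.log (partitionZ N p β i j J) :=
      Real.log_le_log (by positivity) hlb
    rw [Real.log_mul (by positivity) (Real.exp_ne_zero _), Real.log_pow, Real.log_exp] at this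
    linarith
  · have : Real.log (partitionZ N p β i j J) ≤ Real.log (2 ^ N * Real.exp (β * p)) :=
      Real.log_le_log hZ hub
    rw [Real.log_mul (by positivity) (Real.exp_ne_zero _), Real.log_pow, Real.log_exp] at this
    linarith

lemma abs_sum_le_card_mul {X : Type*} [Fintype X] (h : X → ℝ) (B : ℝ)
    (hb : ∀ x, |h x| ≤ B) : |∑ x : X, h x| ≤ (Fintype.card X : ℝ) * B := by
  calc |∑ x : X, h x| ≤ ∑ x : X, |h x| := Finset.abs_sum_le_sum_abs _ _
    _ ≤ ∑ _x : X, B := Finset.sum_le_sum fun x _ => hb x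
    _ = (Fintype.card X : ℝ) * B := by rw [Finset.sum_const, nsmul_eq_mul, Finset.card_univ]

/-- Bound on a normalized triple average. -/
lemma abs_tripleAvg_le {N : ℕ} (hN : 1 ≤ N) {q : ℕ}
    (g : (Fin q → Fin N) → (Fin q → Fin N) → (Fin q → Bool) → ℝ) (B : ℝ)
    (hg : ∀ i j J, |g i j J| ≤ B) :
    |(∑ i : Fin q → Fin N, ∑ j : Fin q → Fin N, ∑ J : Fin q → Bool, g i j J) /
      ((N : ℝ) ^ q * (N : ℝ) ^ q * 2 ^ q)| ≤ B := by
  have hNpos : (0:ℝ) < (N:ℝ) := by exact_mod_cast Nat.lt_of_lt_of_le Nat.zero_lt_one hN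
  have hD : (0:ℝ) < (N : ℝ) ^ q * (N : ℝ) ^ q * 2 ^ q := by positivity
  have hcF : (Fintype.card (Fin q → Fin N) : ℝ) = (N:ℝ) ^ q := by
    simp [Fintype.card_fun]
  have hcB : (Fintype.card (Fin q → Bool) : ℝ) = (2:ℝ) ^ q := by
    simp [Fintype.card_fun]
  have hnum : |∑ i : Fin q → Fin N, ∑ j : Fin q → Fin N, ∑ J : Fin q → Bool, g i j J|
      ≤ (N:ℝ) ^ q * ((N:ℝ) ^ q * ((2:ℝ) ^ q * B)) := by
    rw [← hcF, ← hcB]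
    refine abs_sum_le_card_mul _ _ fun i => ?_
    refine abs_sum_le_card_mul _ _ fun j => ?_
    exact abs_sum_le_card_mul _ _ fun J => hg i j J
  rw [abs_div, abs_of_pos hD, div_le_iff₀ hD]
  calc |∑ i : Fin q → Fin N, ∑ j : Fin q → Fin N, ∑ J : Fin q → Bool, g i j J|
      ≤ (N:ℝ) ^ q * ((N:ℝ) ^ q * ((2:ℝ) ^ q * B)) := hnum
    _ = B * ((N : ℝ) ^ q * (N : ℝ) ^ q * 2 ^ q) := by ring

/-! ### Combining two independent families -/

lemma negBetaH_append (N p q : ℕ) (β : ℝ) (i j : Fin p → Fin N) (J : Fin p → Bool)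
    (i' j' : Fin q → Fin N) (J' : Fin q → Bool) (σ : Fin N → Bool) :
    negBetaH N (p+q) β (Fin.append i i') (Fin.append j j') (Fin.append J J') σ
      = negBetaH N p β i j J σ + negBetaH N q β i' j' J' σ := by
  unfold negBetaH
  rw [Fin.sum_univ_add]
  simp only [Fin.append_left, Fin.append_right]
  ring

lemma sum_exp_append (N p q : ℕ) (β : ℝ) (i j : Fin p → Fin N) (J : Fin p → Bool)
    (i' j' : Fin q → Fin N) (J' : Fin q → Bool) :
    (∑ σ : Fin N → Bool, Real.exp (negBetaH N p β i j J σ + negBetaH N q β i' j' J' σ))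
      = partitionZ N (p+q) β (Fin.append i i') (Fin.append j j') (Fin.append J J') := by
  unfold partitionZ
  exact Finset.sum_congr rfl fun σ _ => by rw [negBetaH_append]

/-- The equivalence between pairs of tuples and appended tuples. -/
def appendEquiv (X : Type*) (p q : ℕ) : ((Fin p → X) × (Fin q → X)) ≃ (Fin (p+q) → X) where
  toFun x := Fin.append x.1 x.2
  invFun f := (fun ν => f (Fin.castAdd q ν), fun ν => f (Fin.natAdd p ν))
  left_inv x := by
    ext ν
    · exact Fin.append_left _ _ _
    · exact Fin.append_right _ _ _
  right_inv f := by
    funext ν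
    refine Fin.addCases (fun ν => ?_) (fun ν => ?_) ν
    · exact Fin.append_left _ _ _
    · exact Fin.append_right _ _ _

def shuffle (A₁ A₂ A₃ B₁ B₂ B₃ : Type*) :
    ((A₁ × A₂ × A₃) × (B₁ × B₂ × B₃)) ≃ ((A₁ × B₁) × (A₂ × B₂) × (A₃ × B₃)) where
  toFun x := ((x.1.1, x.2.1), (x.1.2.1, x.2.2.1), (x.1.2.2, x.2.2.2))
  invFun y := ((y.1.1, y.2.1.1, y.2.2.1), (y.1.2, y.2.1.2, y.2.2.2))
  left_inv _ := rfl
  right_inv _ := rfl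

lemma pack3 {A B C : Type*} [Fintype A] [Fintype B] [Fintype C] (h : A → B → C → ℝ) :
    ∑ a : A, ∑ b : B, ∑ c : C, h a b c = ∑ x : A × B × C, h x.1 x.2.1 x.2.2 := by
  rw [Fintype.sum_prod_type]
  refine Finset.sum_congr rfl fun a _ => ?_
  rw [Fintype.sum_prod_type]

/-- Six-fold sum over two independent families equals the sum over the combined family. -/
lemma six_fold (N p q : ℕ)
    (g : (Fin (p+q) → Fin N) → (Fin (p+q) → Fin N) → (Fin (p+q) → Bool) → ℝ) :
    (∑ i : Fin p → Fin N, ∑ j : Fin p → Fin N, ∑ J : Fin p → Bool,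
      ∑ i' : Fin q → Fin N, ∑ j' : Fin q → Fin N, ∑ J' : Fin q → Bool,
        g (Fin.append i i') (Fin.append j j') (Fin.append J J'))
      = ∑ I : Fin (p+q) → Fin N, ∑ Jb : Fin (p+q) → Fin N, ∑ K : Fin (p+q) → Bool, g I Jb K := by
  classical
  rw [pack3,
    Finset.sum_congr rfl (fun x _ => pack3 (fun i' j' J' =>
      g (Fin.append x.1 i') (Fin.append x.2.1 j') (Fin.append x.2.2 J'))),
    pack3 g]
  set Tp := (Fin p → Fin N) × (Fin p → Fin N) × (Fin p → Bool) with hTp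
  set Tq := (Fin q → Fin N) × (Fin q → Fin N) × (Fin q → Bool) with hTq
  set E := (shuffle (Fin p → Fin N) (Fin p → Fin N) (Fin p → Bool)
      (Fin q → Fin N) (Fin q → Fin N) (Fin q → Bool)).trans
    (Equiv.prodCongr (appendEquiv (Fin N) p q)
      (Equiv.prodCongr (appendEquiv (Fin N) p q) (appendEquiv Bool p q))) with hE
  refine Eq.trans (Fintype.sum_prod_type (f := fun z : Tp × Tq =>
    g (Fin.append z.1.1 z.2.1) (Fin.append z.1.2.1 z.2.2.1)
      (Fin.append z.1.2.2 z.2.2.2))).symm ?_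
  exact Fintype.sum_equiv E _ _ (fun z => rfl)

/-! ### The averaged quantities -/

/-- The averaged log-partition function at size `n`. -/
def Fn (N : ℕ) (β : ℝ) (n : ℕ) : ℝ :=
  (∑ i : Fin n → Fin N, ∑ j : Fin n → Fin N, ∑ J : Fin n → Bool,
    Real.log (partitionZ N n β i j J)) / ((N : ℝ) ^ n * (N : ℝ) ^ n * 2 ^ n)

lemma abs_Fn_le {N : ℕ} (hN : 1 ≤ N) {β : ℝ} (hβ : 0 ≤ β) (n : ℕ) :
    |Fn N β n| ≤ (N : ℝ) * Real.log 2 + β * n :=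
  abs_tripleAvg_le hN _ _ (fun i j J => abs_log_Z_le hβ i j J)

lemma Fn_le_two_pow {N : ℕ} (hN : 1 ≤ N) {β : ℝ} (hβ : 0 ≤ β) (n : ℕ) :
    |Fn N β n| ≤ ((N : ℝ) * Real.log 2 + β) * 2 ^ n :=
  (abs_Fn_le hN hβ n).trans (linear_le_two_pow (by positivity) hβ n)

/-- Inner average of the appended log-partition function. -/
def U (N : ℕ) (β : ℝ) (p : ℕ) (i j : Fin p → Fin N) (J : Fin p → Bool) (q : ℕ) : ℝ :=
  (∑ i' : Fin q → Fin N, ∑ j' : Fin q → Fin N, ∑ J' : Fin q → Bool,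
    Real.log (partitionZ N (p+q) β (Fin.append i i') (Fin.append j j') (Fin.append J J')))
    / ((N : ℝ) ^ q * (N : ℝ) ^ q * 2 ^ q)

lemma abs_U_le {N : ℕ} (hN : 1 ≤ N) {β : ℝ} (hβ : 0 ≤ β) {p : ℕ}
    (i j : Fin p → Fin N) (J : Fin p → Bool) (q : ℕ) :
    |U N β p i j J q| ≤ ((N : ℝ) * Real.log 2 + β * p + β) * 2 ^ q := by
  have h1 : |U N β p i j J q| ≤ (N : ℝ) * Real.log 2 + β * (p + q : ℕ) := by
    exact abs_tripleAvg_le hN _ _ (fun i' j' J' => abs_log_Z_le hβ _ _ _)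
  refine h1.trans ?_
  have h2 : (N : ℝ) * Real.log 2 + β * ((p : ℝ) + q) =
      ((N : ℝ) * Real.log 2 + β * p) + β * q := by ring
  push_cast
  rw [h2]
  exact linear_le_two_pow (by positivity) hβ q

lemma tripleSum_const (N q : ℕ) (c : ℝ) :
    (∑ _i : Fin q → Fin N, ∑ _j : Fin q → Fin N, ∑ _J : Fin q → Bool, c)
      = ((N : ℝ) ^ q * (N : ℝ) ^ q * 2 ^ q) * c := by
  simp [Finset.sum_const, Finset.card_univ, Fintype.card_fun, nsmul_eq_mul]
  push_cast
  ring

lemma quenchedAvg_eq (N : ℕ) (lam : ℝ)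
    (g : (p : ℕ) → (Fin p → Fin N) → (Fin p → Fin N) → (Fin p → Bool) → ℝ) :
    quenchedAvg N lam g = ∑' p : ℕ, w lam p *
      ((∑ i : Fin p → Fin N, ∑ j : Fin p → Fin N, ∑ J : Fin p → Bool, g p i j J) /
        ((N : ℝ) ^ p * (N : ℝ) ^ p * 2 ^ p)) := rfl

/-- Inner quenched average: integrating out the second family. -/
lemma inner_avg {N : ℕ} (hN : 1 ≤ N) {β μ : ℝ} (hβ : 0 ≤ β) (hμ : 0 ≤ μ)
    {p : ℕ} (i j : Fin p → Fin N) (J : Fin p → Bool) :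
    (quenchedAvg N μ fun q i' j' J' =>
      Real.log ((∑ σ : Fin N → Bool,
        Real.exp (negBetaH N p β i j J σ + negBetaH N q β i' j' J' σ)) /
          partitionZ N p β i j J))
      = (∑' q : ℕ, w μ q * U N β p i j J q) - Real.log (partitionZ N p β i j J) := by
  have hNpos : (0:ℝ) < (N:ℝ) := by exact_mod_cast Nat.lt_of_lt_of_le Nat.zero_lt_one hN
  set c := Real.log (partitionZ N p β i j J) with hc
  rw [quenchedAvg_eq]
  have hterm : ∀ q : ℕ, w μ q *
      ((∑ i' : Fin q → Fin N, ∑ j' : Fin q → Fin N, ∑ J' : Fin q → Bool,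
        Real.log ((∑ σ : Fin N → Bool,
          Real.exp (negBetaH N p β i j J σ + negBetaH N q β i' j' J' σ)) /
            partitionZ N p β i j J)) / ((N : ℝ) ^ q * (N : ℝ) ^ q * 2 ^ q))
      = w μ q * U N β p i j J q - w μ q * c := by
    intro q
    have hD : (0:ℝ) < (N : ℝ) ^ q * (N : ℝ) ^ q * 2 ^ q := by positivity
    have hlog : ∀ (i' j' : Fin q → Fin N) (J' : Fin q → Bool),
        Real.log ((∑ σ : Fin N → Bool,
          Real.exp (negBetaH N p β i j J σ + negBetaH N q β i' j' J' σ)) /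
            partitionZ N p β i j J)
        = Real.log (partitionZ N (p+q) β (Fin.append i i') (Fin.append j j')
            (Fin.append J J')) - c := by
      intro i' j' J'
      rw [sum_exp_append, Real.log_div (Z_pos _ _ _ _ _ _).ne' (Z_pos _ _ _ _ _ _).ne']
    have hsum : (∑ i' : Fin q → Fin N, ∑ j' : Fin q → Fin N, ∑ J' : Fin q → Bool,
        Real.log ((∑ σ : Fin N → Bool,
          Real.exp (negBetaH N p β i j J σ + negBetaH N q β i' j' J' σ)) /
            partitionZ N p β i j J))
        = (∑ i' : Fin q → Fin N, ∑ j' : Fin q → Fin N, ∑ J' : Fin q → Bool,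
            Real.log (partitionZ N (p+q) β (Fin.append i i') (Fin.append j j')
              (Fin.append J J'))) - ((N : ℝ) ^ q * (N : ℝ) ^ q * 2 ^ q) * c := by
      rw [← tripleSum_const N q c, ← Finset.sum_sub_distrib]
      refine Finset.sum_congr rfl fun i' _ => ?_
      rw [← Finset.sum_sub_distrib]
      refine Finset.sum_congr rfl fun j' _ => ?_
      rw [← Finset.sum_sub_distrib]
      exact Finset.sum_congr rfl fun J' _ => hlog i' j' J'
    rw [hsum, sub_div, mul_div_cancel_left₀ c hD.ne', mul_sub]
    rfl
  rw [tsum_congr hterm,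
    Summable.tsum_sub (summable_w_mul hμ (fun q => abs_U_le hN hβ i j J q))
      ((summable_w μ).mul_right c),
    tsum_mul_right, tsum_w, one_mul]

set_option maxHeartbeats 1000000 in
/-- Outer average at a fixed outer Poisson value `p`. -/
lemma outer_per_p {N : ℕ} (hN : 1 ≤ N) {β μ : ℝ} (hβ : 0 ≤ β) (hμ : 0 ≤ μ) (p : ℕ) :
    (∑ i : Fin p → Fin N, ∑ j : Fin p → Fin N, ∑ J : Fin p → Bool,
      ((∑' q : ℕ, w μ q * U N β p i j J q) - Real.log (partitionZ N p β i j J)))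
      / ((N : ℝ) ^ p * (N : ℝ) ^ p * 2 ^ p)
    = (∑' q : ℕ, w μ q * Fn N β (p+q)) - Fn N β p := by
  have hNpos : (0:ℝ) < (N:ℝ) := by exact_mod_cast Nat.lt_of_lt_of_le Nat.zero_lt_one hN
  have hD : (0:ℝ) < (N : ℝ) ^ p * (N : ℝ) ^ p * 2 ^ p := by positivity
  have hsplit : (∑ i : Fin p → Fin N, ∑ j : Fin p → Fin N, ∑ J : Fin p → Bool,
      ((∑' q : ℕ, w μ q * U N β p i j J q) - Real.log (partitionZ N p β i j J)))
      = (∑ i : Fin p → Fin N, ∑ j : Fin p → Fin N, ∑ J : Fin p → Bool,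
          ∑' q : ℕ, w μ q * U N β p i j J q)
        - (∑ i : Fin p → Fin N, ∑ j : Fin p → Fin N, ∑ J : Fin p → Bool,
            Real.log (partitionZ N p β i j J)) := by
    rw [← Finset.sum_sub_distrib]
    refine Finset.sum_congr rfl fun i _ => ?_
    rw [← Finset.sum_sub_distrib]
    refine Finset.sum_congr rfl fun j _ => ?_
    rw [← Finset.sum_sub_distrib]
  have hFnp : (∑ i : Fin p → Fin N, ∑ j : Fin p → Fin N, ∑ J : Fin p → Bool,
      Real.log (partitionZ N p β i j J)) = Fn N β p * ((N : ℝ) ^ p * (N : ℝ) ^ p * 2 ^ p) := by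
    rw [Fn, div_mul_cancel₀ _ hD.ne']
  have hU : (∑ i : Fin p → Fin N, ∑ j : Fin p → Fin N, ∑ J : Fin p → Bool,
      ∑' q : ℕ, w μ q * U N β p i j J q)
      = (∑' q : ℕ, w μ q * Fn N β (p+q)) * ((N : ℝ) ^ p * (N : ℝ) ^ p * 2 ^ p) := by
    rw [pack3 (fun i j J => ∑' q : ℕ, w μ q * U N β p i j J q)]
    rw [← Summable.tsum_finsetSum (fun x _ => summable_w_mul hμ (fun q => abs_U_le hN hβ x.1 x.2.1 x.2.2 q))]
    rw [← tsum_mul_right]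
    refine tsum_congr fun q => ?_
    have hDq : (0:ℝ) < (N : ℝ) ^ q * (N : ℝ) ^ q * 2 ^ q := by positivity
    rw [← Finset.mul_sum]
    have hsumU : (∑ x : (Fin p → Fin N) × (Fin p → Fin N) × (Fin p → Bool),
        U N β p x.1 x.2.1 x.2.2 q) = Fn N β (p+q) * ((N : ℝ) ^ p * (N : ℝ) ^ p * 2 ^ p) := by
      rw [← pack3 (fun i j J => U N β p i j J q)]
      unfold U
      rw [Finset.sum_congr rfl (fun i _ => Finset.sum_congr rfl (fun j _ =>
        (Finset.sum_div _ _ _).symm)),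
        Finset.sum_congr rfl (fun i _ => (Finset.sum_div _ _ _).symm),
        ← Finset.sum_div]
      rw [six_fold N p q (fun I Jb K => Real.log (partitionZ N (p+q) β I Jb K))]
      rw [Fn]
      have hpow : ((N : ℝ) ^ (p+q) * (N : ℝ) ^ (p+q) * 2 ^ (p+q))
          = ((N : ℝ) ^ p * (N : ℝ) ^ p * 2 ^ p) * ((N : ℝ) ^ q * (N : ℝ) ^ q * 2 ^ q) := by
        simp only [pow_add]; ring
      rw [hpow]
      field_simp
    rw [hsumU]; ring
  rw [hsplit, hFnp, hU, ← sub_mul, mul_div_assoc, div_self hD.ne', mul_one]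

/-- Bound for the inner average as a function of the outer Poisson value. -/
lemma abs_tsum_w_shift {μ : ℝ} (hμ : 0 ≤ μ) {F : ℕ → ℝ} {C : ℝ}
    (hF : ∀ n, |F n| ≤ C * 2 ^ n) (p : ℕ) :
    |∑' q : ℕ, w μ q * F (p+q)| ≤ (C * Real.exp μ) * 2 ^ p := by
  have hFs : ∀ q, |F (p+q)| ≤ (C * 2 ^ p) * 2 ^ q := by
    intro q
    refine (hF (p+q)).trans (le_of_eq ?_)
    rw [pow_add]; ring
  have hs : Summable (fun q => w μ q * F (p+q)) := summable_w_mul hμ hFs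
  have habs : Summable (fun q : ℕ => |w μ q * F (p+q)|) := hs.abs
  have hsum2 : Summable (fun q => w μ q * ((C * 2 ^ p) * 2 ^ q)) := by
    have h : ∀ q, w μ q * ((C * 2 ^ p) * 2 ^ q) = (C * 2 ^ p) * (w μ q * 2 ^ q) :=
      fun q => by ring
    simp only [h]
    exact (summable_w_mul_pow μ 2).mul_left _
  have step1 : |∑' q : ℕ, w μ q * F (p+q)| ≤ ∑' q : ℕ, |w μ q * F (p+q)| := by
    have := norm_tsum_le_tsum_norm (f := fun q : ℕ => w μ q * F (p+q))
      (by simpa only [Real.norm_eq_abs] using habs)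
    simpa only [Real.norm_eq_abs] using this
  have step2 : ∑' q : ℕ, |w μ q * F (p+q)| ≤ ∑' q : ℕ, w μ q * ((C * 2 ^ p) * 2 ^ q) := by
    refine Summable.tsum_le_tsum (fun q => ?_) habs hsum2
    rw [abs_mul, abs_of_nonneg (w_nonneg hμ q)]
    exact mul_le_mul_of_nonneg_left (hFs q) (w_nonneg hμ q)
  have step3 : ∑' q : ℕ, w μ q * ((C * 2 ^ p) * 2 ^ q) = (C * Real.exp μ) * 2 ^ p := by
    have h : ∀ q, w μ q * ((C * 2 ^ p) * 2 ^ q) = (C * 2 ^ p) * (w μ q * 2 ^ q) :=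
      fun q => by ring
    simp only [h]
    rw [tsum_mul_left, tsum_w_mul_pow, ← Real.exp_add,
      show -μ + μ * 2 = μ by ring]
    ring
  linarith
/-- `N` times the pressure as a `Fn`-average. -/
lemma N_mul_pressure {N : ℕ} (hN : 1 ≤ N) (β a : ℝ) :
    (N : ℝ) * pressure N β a = ∑' p : ℕ, w (a * N) p * Fn N β p := by
  have hNpos : (0:ℝ) < (N:ℝ) := by exact_mod_cast Nat.lt_of_lt_of_le Nat.zero_lt_one hN
  unfold pressure
  rw [quenchedAvg_eq, ← tsum_mul_left]
  refine tsum_congr fun p => ?_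
  have hpull : (∑ i : Fin p → Fin N, ∑ j : Fin p → Fin N, ∑ J : Fin p → Bool,
      (1 / (N : ℝ)) * Real.log (partitionZ N p β i j J))
      = (1 / (N : ℝ)) * ∑ i : Fin p → Fin N, ∑ j : Fin p → Fin N, ∑ J : Fin p → Bool,
          Real.log (partitionZ N p β i j J) := by
    simp only [← Finset.mul_sum]
  rw [hpull, Fn]
  have hD : (0:ℝ) < (N : ℝ) ^ p * (N : ℝ) ^ p * 2 ^ p := by positivity
  field_simp

end CavityAux

open CavityAux in
/-- Let `H'_N(σ) = -∑_{ν=1}^{P_α} J'_ν σ_{i'_ν} σ_{j'_ν}` be an independent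
copy of the Viana–Bray Hamiltonian whose Poisson variable has mean `α` (indices and signs
i.i.d. uniform, independent of the quenched variables in `Ω`).  Then
`E ln Ω (exp (-β H'_N)) = N A_N(α(1+1/N)) - N A_N(α)`. -/
theorem cavity_connectivity_shift (N : ℕ) (hN : 1 ≤ N) (β α : ℝ) (hβ : 0 < β)
    (hα : 0 < α) :
    (quenchedAvg N (α * N) fun p i j J =>
      quenchedAvg N α fun p' i' j' J' =>
        Real.log ((∑ σ : Fin N → Bool,
          Real.exp (negBetaH N p β i j J σ + negBetaH N p' β i' j' J' σ)) /
            partitionZ N p β i j J)) =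
      (N : ℝ) * pressure N β (α * (1 + 1 / N)) - (N : ℝ) * pressure N β α := by
  classical
  have hβ' : 0 ≤ β := hβ.le
  have hα' : 0 ≤ α := hα.le
  have hNpos : (0:ℝ) < (N:ℝ) := by exact_mod_cast hN
  have hlam : 0 ≤ α * (N:ℝ) := by positivity
  have hC : ∀ n, |Fn N β n| ≤ ((N:ℝ) * Real.log 2 + β) * 2 ^ n :=
    Fn_le_two_pow hN hβ'
  have key : (quenchedAvg N (α * N) fun p i j J =>
      quenchedAvg N α fun p' i' j' J' =>
        Real.log ((∑ σ : Fin N → Bool,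
          Real.exp (negBetaH N p β i j J σ + negBetaH N p' β i' j' J' σ)) /
            partitionZ N p β i j J))
      = ∑' p : ℕ, w (α * N) p *
          ((∑' q : ℕ, w α q * Fn N β (p+q)) - Fn N β p) := by
    rw [quenchedAvg_eq]
    refine tsum_congr fun p => ?_
    congr 1
    rw [Finset.sum_congr rfl (fun i _ => Finset.sum_congr rfl (fun j _ =>
      Finset.sum_congr rfl (fun J _ => inner_avg hN hβ' hα' i j J)))]
    exact outer_per_p hN hβ' hα' p
  have s1 : Summable (fun p => w (α*N) p * (∑' q : ℕ, w α q * Fn N β (p+q))) :=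
    summable_w_mul hlam (fun p => abs_tsum_w_shift hα' hC p)
  have s2 : Summable (fun p => w (α*N) p * Fn N β p) := summable_w_mul hlam hC
  have hsub : (∑' p : ℕ, w (α*N) p * ((∑' q : ℕ, w α q * Fn N β (p+q)) - Fn N β p))
      = (∑' p : ℕ, w (α*N) p * (∑' q : ℕ, w α q * Fn N β (p+q)))
        - ∑' p : ℕ, w (α*N) p * Fn N β p := by
    rw [← Summable.tsum_sub s1 s2]
    exact tsum_congr fun p => by ring
  rw [key, hsub, poisson_superposition hlam hα' hC,
    N_mul_pressure hN β (α * (1 + 1/N)), N_mul_pressure hN β α,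
    show α * (1 + 1/(N:ℝ)) * (N:ℝ) = α * (N:ℝ) + α by field_simp]

end
end

section
/- In the Viana–Bray model, for every fixed N and β > 0, the quenched pressure α ↦ A_N(α) is differentiable on (0,∞), and for every α > 0 one has A_N′(α) = Σ_{n=1}^∞ (θ^{2n}/(2n)) (1 − ⟨q²_{1⋯2n}⟩), where θ = tanh β and ⟨q²_{1⋯2n}⟩ = E Ω^{⊗2n}(q²_{1⋯2n}) is computed with 2n independent replicas from the Gibbs measure at parameters (N, α, β). -/
noncomputable section

/-- The Gibbs two-point correlation `Ω(σ_a σ_b)` for a given realization of the quenched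
randomness. -/
def gibbsCorr (N p : ℕ) (β : ℝ) (i j : Fin p → Fin N) (J : Fin p → Bool)
    (a b : Fin N) : ℝ :=
  (∑ σ : Fin N → Bool, Real.exp (negBetaH N p β i j J σ) * spin (σ a) * spin (σ b)) /
    partitionZ N p β i j J

/-- The quenched second moment of the multi-overlap of `2n` replicas:
`⟨q²_{1⋯2n}⟩ = E Ω^{⊗2n}(q²_{1⋯2n}) = E[(1/N²) ∑_{a,b} Ω(σ_a σ_b)^{2n}]`. -/
def overlapMoment (N : ℕ) (β α : ℝ) (n : ℕ) : ℝ :=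
  quenchedAvg N (α * N) fun p i j J =>
    (1 / (N : ℝ) ^ 2) * ∑ a : Fin N, ∑ b : Fin N, gibbsCorr N p β i j J a b ^ (2 * n)

namespace VB

lemma spin_cases (b : Bool) : spin b = 1 ∨ spin b = -1 := by
  cases b <;> simp [spin]

lemma abs_spin (b : Bool) : |spin b| = 1 := by
  cases b <;> simp [spin]

lemma partitionZ_pos (N p : ℕ) (β : ℝ) (i j : Fin p → Fin N) (J : Fin p → Bool) :
    0 < partitionZ N p β i j J :=
  Finset.sum_pos (fun σ _ => Real.exp_pos _) ⟨fun _ => true, Finset.mem_univ _⟩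

lemma abs_gibbsCorr_le_one (N p : ℕ) (β : ℝ) (i j : Fin p → Fin N) (J : Fin p → Bool)
    (a b : Fin N) : |gibbsCorr N p β i j J a b| ≤ 1 := by
  have hZ := partitionZ_pos N p β i j J
  rw [gibbsCorr, abs_div, abs_of_pos hZ, div_le_one hZ]
  calc |∑ σ : Fin N → Bool, Real.exp (negBetaH N p β i j J σ) * spin (σ a) * spin (σ b)|
      ≤ ∑ σ : Fin N → Bool, |Real.exp (negBetaH N p β i j J σ) * spin (σ a) * spin (σ b)| :=
        Finset.abs_sum_le_sum_abs _ _
    _ = partitionZ N p β i j J := by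
        refine Finset.sum_congr rfl fun σ _ => ?_
        rw [abs_mul, abs_mul, abs_spin, abs_spin, Real.abs_exp, mul_one, mul_one]

lemma abs_tanh_lt_one (β : ℝ) : |Real.tanh β| < 1 := by
  have h1 : 0 < Real.cosh β - Real.sinh β := by
    rw [Real.cosh_sub_sinh]; exact Real.exp_pos _
  have h2 : 0 < Real.cosh β + Real.sinh β := by
    rw [Real.cosh_add_sinh]; exact Real.exp_pos _
  have hc := Real.cosh_pos β
  rw [Real.tanh_eq_sinh_div_cosh, abs_div, abs_of_pos hc, div_lt_one hc, abs_lt]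
  constructor <;> linarith

lemma abs_negBetaH_le (N p : ℕ) (β : ℝ) (hβ : 0 ≤ β) (i j : Fin p → Fin N)
    (J : Fin p → Bool) (σ : Fin N → Bool) : |negBetaH N p β i j J σ| ≤ β * p := by
  rw [negBetaH, abs_mul, abs_of_nonneg hβ]
  refine mul_le_mul_of_nonneg_left ?_ hβ
  calc |∑ ν : Fin p, spin (J ν) * spin (σ (i ν)) * spin (σ (j ν))|
      ≤ ∑ ν : Fin p, |spin (J ν) * spin (σ (i ν)) * spin (σ (j ν))| :=
        Finset.abs_sum_le_sum_abs _ _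
    _ = ∑ _ν : Fin p, (1:ℝ) := by
        refine Finset.sum_congr rfl fun ν _ => ?_
        rw [abs_mul, abs_mul, abs_spin, abs_spin, abs_spin]; norm_num
    _ = p := by simp

lemma abs_log_partitionZ_le (N p : ℕ) (hN : 1 ≤ N) (β : ℝ) (hβ : 0 ≤ β)
    (i j : Fin p → Fin N) (J : Fin p → Bool) :
    |Real.log (partitionZ N p β i j J)| ≤ N * Real.log 2 + β * p := by
  have hZ := partitionZ_pos N p β i j J
  have hcard : (Fintype.card (Fin N → Bool) : ℝ) = 2 ^ N := by
    simp [Fintype.card_fun]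
  have hub : partitionZ N p β i j J ≤ 2 ^ N * Real.exp (β * p) := by
    calc partitionZ N p β i j J ≤ ∑ _σ : Fin N → Bool, Real.exp (β * p) :=
          Finset.sum_le_sum fun σ _ => by
            apply Real.exp_le_exp.mpr
            exact (abs_le.mp (abs_negBetaH_le N p β hβ i j J σ)).2
      _ = 2 ^ N * Real.exp (β * p) := by
          rw [Finset.sum_const, Finset.card_univ, nsmul_eq_mul, hcard]
  have hlb : 2 ^ N * Real.exp (-(β * p)) ≤ partitionZ N p β i j J := by
    calc (2:ℝ) ^ N * Real.exp (-(β * p)) = ∑ _σ : Fin N → Bool, Real.exp (-(β * p)) := by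
          rw [Finset.sum_const, Finset.card_univ, nsmul_eq_mul, hcard]
      _ ≤ partitionZ N p β i j J :=
          Finset.sum_le_sum fun σ _ => by
            apply Real.exp_le_exp.mpr
            have := (abs_le.mp (abs_negBetaH_le N p β hβ i j J σ)).1
            linarith
  have hl2 : (0:ℝ) ≤ (N:ℝ) * Real.log 2 := by
    have := Real.log_pos (by norm_num : (1:ℝ) < 2)
    positivity
  rw [abs_le]
  constructor
  · have := Real.log_le_log (by positivity) hlb
    rw [Real.log_mul (by positivity) (Real.exp_ne_zero _), Real.log_pow, Real.log_exp] at this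
    push_cast at this ⊢
    linarith
  · have := Real.log_le_log hZ hub
    rw [Real.log_mul (by positivity) (Real.exp_ne_zero _), Real.log_pow, Real.log_exp] at this
    push_cast at this ⊢
    linarith

def avgF (N p : ℕ) (F : (Fin p → Fin N) → (Fin p → Fin N) → (Fin p → Bool) → ℝ) : ℝ :=
  (∑ i : Fin p → Fin N, ∑ j : Fin p → Fin N, ∑ J : Fin p → Bool, F i j J) /
    ((N : ℝ) ^ p * (N : ℝ) ^ p * 2 ^ p)

lemma norm_pos (N p : ℕ) (hN : 1 ≤ N) : (0:ℝ) < (N : ℝ) ^ p * (N : ℝ) ^ p * 2 ^ p := by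
  have : (0:ℝ) < N := by exact_mod_cast hN
  positivity

lemma abs_sum_le_card_mul {ι : Type*} [Fintype ι] (f : ι → ℝ) (C : ℝ)
    (h : ∀ x, |f x| ≤ C) : |∑ x : ι, f x| ≤ (Fintype.card ι : ℝ) * C := by
  calc |∑ x : ι, f x| ≤ ∑ x : ι, |f x| := Finset.abs_sum_le_sum_abs _ _
    _ ≤ ∑ _x : ι, C := Finset.sum_le_sum fun x _ => h x
    _ = (Fintype.card ι : ℝ) * C := by
        rw [Finset.sum_const, Finset.card_univ, nsmul_eq_mul]

lemma avgF_abs_le (N p : ℕ) (hN : 1 ≤ N)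
    (F : (Fin p → Fin N) → (Fin p → Fin N) → (Fin p → Bool) → ℝ) (C : ℝ)
    (h : ∀ i j J, |F i j J| ≤ C) : |avgF N p F| ≤ C := by
  have hNpos : (0:ℝ) < N := by exact_mod_cast hN
  have hd := norm_pos N p hN
  have hJ : ∀ (i j : Fin p → Fin N), |∑ J : Fin p → Bool, F i j J| ≤ (2:ℝ)^p * C := by
    intro i j
    have := abs_sum_le_card_mul (F i j) C (h i j)
    simpa [Fintype.card_fun] using this
  have hj : ∀ i : Fin p → Fin N,
      |∑ j : Fin p → Fin N, ∑ J : Fin p → Bool, F i j J| ≤ (N:ℝ)^p * ((2:ℝ)^p * C) := by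
    intro i
    have := abs_sum_le_card_mul (fun j => ∑ J : Fin p → Bool, F i j J) _ (hJ i)
    simpa [Fintype.card_fun] using this
  have hi : |∑ i : Fin p → Fin N, ∑ j : Fin p → Fin N, ∑ J : Fin p → Bool, F i j J| ≤
      (N:ℝ)^p * ((N:ℝ)^p * ((2:ℝ)^p * C)) := by
    have := abs_sum_le_card_mul
      (fun i => ∑ j : Fin p → Fin N, ∑ J : Fin p → Bool, F i j J) _ hj
    simpa [Fintype.card_fun] using this
  rw [avgF, abs_div, abs_of_pos hd, div_le_iff₀ hd]
  calc |∑ i : Fin p → Fin N, ∑ j : Fin p → Fin N, ∑ J : Fin p → Bool, F i j J|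
      ≤ (N:ℝ)^p * ((N:ℝ)^p * ((2:ℝ)^p * C)) := hi
    _ = C * ((N:ℝ)^p * (N:ℝ)^p * 2^p) := by ring

lemma avgF_const (N p : ℕ) (hN : 1 ≤ N) (k : ℝ) :
    avgF N p (fun _ _ _ => k) = k := by
  have hd := norm_pos N p hN
  rw [avgF]
  simp only [Finset.sum_const, Finset.card_univ, nsmul_eq_mul, Fintype.card_fun,
    Fintype.card_fin, Fintype.card_bool]
  push_cast
  field_simp

lemma avgF_add (N p : ℕ) (F G : (Fin p → Fin N) → (Fin p → Fin N) → (Fin p → Bool) → ℝ) :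
    avgF N p (fun i j J => F i j J + G i j J) = avgF N p F + avgF N p G := by
  rw [avgF, avgF, avgF, ← add_div]
  congr 1
  rw [← Finset.sum_add_distrib]
  refine Finset.sum_congr rfl fun i _ => ?_
  rw [← Finset.sum_add_distrib]
  refine Finset.sum_congr rfl fun j _ => ?_
  rw [← Finset.sum_add_distrib]

lemma avgF_mul (N p : ℕ) (k : ℝ)
    (F : (Fin p → Fin N) → (Fin p → Fin N) → (Fin p → Bool) → ℝ) :
    avgF N p (fun i j J => k * F i j J) = k * avgF N p F := by
  have h : ∑ i : Fin p → Fin N, ∑ j : Fin p → Fin N, ∑ J : Fin p → Bool, k * F i j J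
      = k * ∑ i : Fin p → Fin N, ∑ j : Fin p → Fin N, ∑ J : Fin p → Bool, F i j J := by
    simp_rw [← Finset.mul_sum]
  rw [avgF, avgF, h, mul_div_assoc]

lemma avgF_nonneg (N p : ℕ) (hN : 1 ≤ N)
    (F : (Fin p → Fin N) → (Fin p → Fin N) → (Fin p → Bool) → ℝ)
    (h : ∀ i j J, 0 ≤ F i j J) : 0 ≤ avgF N p F := by
  have hd := norm_pos N p hN
  apply div_nonneg _ hd.le
  exact Finset.sum_nonneg fun i _ => Finset.sum_nonneg fun j _ =>
    Finset.sum_nonneg fun J _ => h i j J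

lemma sum_fn_succ_fin {N p : ℕ} (f : (Fin (p+1) → Fin N) → ℝ) :
    ∑ g : Fin (p+1) → Fin N, f g = ∑ x : Fin N, ∑ g : Fin p → Fin N, f (Fin.cons x g) := by
  rw [← (Fin.consEquiv fun _ => Fin N).sum_comp f, Fintype.sum_prod_type]
  rfl

lemma sum_fn_succ_bool {p : ℕ} (f : (Fin (p+1) → Bool) → ℝ) :
    ∑ g : Fin (p+1) → Bool, f g = ∑ g : Fin p → Bool, ∑ x : Bool, f (Fin.cons x g) := by
  rw [← (Fin.consEquiv fun _ => Bool).sum_comp f, Fintype.sum_prod_type, Finset.sum_comm]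
  rfl

lemma sum_shuffle {A I B Jm K : Type*} [Fintype A] [Fintype I] [Fintype B] [Fintype Jm]
    [Fintype K] (G : A → I → B → Jm → K → ℝ) :
    ∑ a : A, ∑ i : I, ∑ b : B, ∑ j : Jm, ∑ J : K, G a i b j J
      = ∑ i : I, ∑ j : Jm, ∑ J : K, ∑ a : A, ∑ b : B, G a i b j J := by
  calc ∑ a : A, ∑ i : I, ∑ b : B, ∑ j : Jm, ∑ J : K, G a i b j J
      = ∑ i : I, ∑ a : A, ∑ b : B, ∑ j : Jm, ∑ J : K, G a i b j J := Finset.sum_comm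
    _ = ∑ i : I, ∑ a : A, ∑ j : Jm, ∑ b : B, ∑ J : K, G a i b j J :=
        Finset.sum_congr rfl fun i _ => Finset.sum_congr rfl fun a _ => Finset.sum_comm
    _ = ∑ i : I, ∑ j : Jm, ∑ a : A, ∑ b : B, ∑ J : K, G a i b j J :=
        Finset.sum_congr rfl fun i _ => Finset.sum_comm
    _ = ∑ i : I, ∑ j : Jm, ∑ a : A, ∑ J : K, ∑ b : B, G a i b j J :=
        Finset.sum_congr rfl fun i _ => Finset.sum_congr rfl fun j _ =>
          Finset.sum_congr rfl fun a _ => Finset.sum_comm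
    _ = ∑ i : I, ∑ j : Jm, ∑ J : K, ∑ a : A, ∑ b : B, G a i b j J :=
        Finset.sum_congr rfl fun i _ => Finset.sum_congr rfl fun j _ => Finset.sum_comm

lemma avgF_succ (N p : ℕ) (hN : 1 ≤ N)
    (F : (Fin (p+1) → Fin N) → (Fin (p+1) → Fin N) → (Fin (p+1) → Bool) → ℝ) :
    avgF N (p+1) F = avgF N p (fun i j J =>
      (1 / (2 * (N:ℝ)^2)) * ∑ a : Fin N, ∑ b : Fin N, ∑ s : Bool,
        F (Fin.cons a i) (Fin.cons b j) (Fin.cons s J)) := by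
  have hNpos : (0:ℝ) < N := by exact_mod_cast hN
  rw [avgF, avgF]
  have hnum : ∑ i : Fin (p+1) → Fin N, ∑ j : Fin (p+1) → Fin N, ∑ J : Fin (p+1) → Bool, F i j J
      = ∑ i : Fin p → Fin N, ∑ j : Fin p → Fin N, ∑ J : Fin p → Bool,
          ∑ a : Fin N, ∑ b : Fin N, ∑ s : Bool,
            F (Fin.cons a i) (Fin.cons b j) (Fin.cons s J) := by
    simp only [sum_fn_succ_fin, sum_fn_succ_bool]
    exact sum_shuffle (fun a i b j J => ∑ s : Bool, F (Fin.cons a i) (Fin.cons b j) (Fin.cons s J))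
  rw [hnum]
  have hpull : ∑ i : Fin p → Fin N, ∑ j : Fin p → Fin N, ∑ J : Fin p → Bool,
      ((1 / (2 * (N:ℝ)^2)) * ∑ a : Fin N, ∑ b : Fin N, ∑ s : Bool,
        F (Fin.cons a i) (Fin.cons b j) (Fin.cons s J))
      = (1 / (2 * (N:ℝ)^2)) * ∑ i : Fin p → Fin N, ∑ j : Fin p → Fin N, ∑ J : Fin p → Bool,
          ∑ a : Fin N, ∑ b : Fin N, ∑ s : Bool,
            F (Fin.cons a i) (Fin.cons b j) (Fin.cons s J) := by
    rw [Finset.mul_sum]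
    refine Finset.sum_congr rfl fun i _ => ?_
    rw [Finset.mul_sum]
    refine Finset.sum_congr rfl fun j _ => ?_
    rw [Finset.mul_sum]
  rw [hpull]
  have hd := norm_pos N p hN
  have hd1 := norm_pos N (p+1) hN
  rw [div_eq_div_iff hd1.ne' hd.ne', pow_succ, pow_succ, pow_succ]
  have hne : (N:ℝ) ≠ 0 := hNpos.ne'
  field_simp
  ring

lemma negBetaH_cons (N p : ℕ) (β : ℝ) (i j : Fin p → Fin N) (J : Fin p → Bool)
    (a b : Fin N) (s : Bool) (σ : Fin N → Bool) :
    negBetaH N (p+1) β (Fin.cons a i) (Fin.cons b j) (Fin.cons s J) σ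
      = negBetaH N p β i j J σ + β * (spin s * spin (σ a) * spin (σ b)) := by
  rw [negBetaH, negBetaH, Fin.sum_univ_succ]
  simp only [Fin.cons_zero, Fin.cons_succ]
  ring

lemma exp_beta_eps (β ε : ℝ) (hε : ε = 1 ∨ ε = -1) :
    Real.exp (β * ε) = Real.cosh β + Real.sinh β * ε := by
  rcases hε with rfl | rfl
  · rw [mul_one, mul_one, Real.cosh_add_sinh]
  · rw [mul_neg_one, mul_neg_one, ← Real.cosh_sub_sinh]; ring

lemma spin_prod_cases (s : Bool) (x y : Bool) :
    spin s * spin x * spin y = 1 ∨ spin s * spin x * spin y = -1 := by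
  rcases spin_cases s with h1 | h1 <;> rcases spin_cases x with h2 | h2 <;>
    rcases spin_cases y with h3 | h3 <;> rw [h1, h2, h3] <;> norm_num

lemma partitionZ_cons (N p : ℕ) (β : ℝ) (i j : Fin p → Fin N) (J : Fin p → Bool)
    (a b : Fin N) (s : Bool) :
    partitionZ N (p+1) β (Fin.cons a i) (Fin.cons b j) (Fin.cons s J)
      = Real.cosh β * partitionZ N p β i j J
        + Real.sinh β * spin s *
          (∑ σ : Fin N → Bool, Real.exp (negBetaH N p β i j J σ) * spin (σ a) * spin (σ b)) := by
  rw [partitionZ]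
  have h : ∀ σ : Fin N → Bool,
      Real.exp (negBetaH N (p+1) β (Fin.cons a i) (Fin.cons b j) (Fin.cons s J) σ)
      = Real.cosh β * Real.exp (negBetaH N p β i j J σ)
        + Real.sinh β * spin s * (Real.exp (negBetaH N p β i j J σ) * spin (σ a) * spin (σ b)) := by
    intro σ
    rw [negBetaH_cons, Real.exp_add, exp_beta_eps β _ (spin_prod_cases s (σ a) (σ b))]
    ring
  rw [Finset.sum_congr rfl fun σ _ => h σ, Finset.sum_add_distrib, ← Finset.mul_sum,
    ← Finset.mul_sum, partitionZ]

lemma partitionZ_cons' (N p : ℕ) (β : ℝ) (i j : Fin p → Fin N) (J : Fin p → Bool)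
    (a b : Fin N) (s : Bool) :
    partitionZ N (p+1) β (Fin.cons a i) (Fin.cons b j) (Fin.cons s J)
      = Real.cosh β * partitionZ N p β i j J *
          (1 + Real.tanh β * spin s * gibbsCorr N p β i j J a b) := by
  rw [partitionZ_cons, gibbsCorr, Real.tanh_eq_sinh_div_cosh]
  have hZ := (partitionZ_pos N p β i j J).ne'
  have hc := (Real.cosh_pos β).ne'
  field_simp

lemma one_add_corr_pos (N p : ℕ) (β : ℝ) (i j : Fin p → Fin N) (J : Fin p → Bool)
    (a b : Fin N) (s : Bool) :
    0 < 1 + Real.tanh β * spin s * gibbsCorr N p β i j J a b := by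
  have h1 : |Real.tanh β * spin s * gibbsCorr N p β i j J a b| < 1 := by
    rw [abs_mul, abs_mul, abs_spin, mul_one]
    calc |Real.tanh β| * |gibbsCorr N p β i j J a b| ≤ |Real.tanh β| * 1 :=
          mul_le_mul_of_nonneg_left (abs_gibbsCorr_le_one N p β i j J a b) (abs_nonneg _)
      _ < 1 := by rw [mul_one]; exact abs_tanh_lt_one β
  have := (abs_lt.mp h1).1
  linarith

lemma log_partitionZ_cons (N p : ℕ) (β : ℝ) (i j : Fin p → Fin N) (J : Fin p → Bool)
    (a b : Fin N) (s : Bool) :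
    Real.log (partitionZ N (p+1) β (Fin.cons a i) (Fin.cons b j) (Fin.cons s J))
      = Real.log (Real.cosh β) + Real.log (partitionZ N p β i j J)
        + Real.log (1 + Real.tanh β * spin s * gibbsCorr N p β i j J a b) := by
  rw [partitionZ_cons', Real.log_mul (mul_pos (Real.cosh_pos β) (partitionZ_pos N p β i j J)).ne' (one_add_corr_pos N p β i j J a b s).ne',
    Real.log_mul (Real.cosh_pos β).ne' (partitionZ_pos N p β i j J).ne']
lemma hasSum_log_half {x : ℝ} (h : |x| < 1) :
    HasSum (fun n : ℕ => x ^ (n+1) / (2 * ((n:ℝ)+1))) (-(1/2) * Real.log (1-x)) := by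
  have H := (Real.hasSum_pow_div_log_of_abs_lt_one h).mul_left (1/2)
  have h1 : (fun n : ℕ => (1/2) * (x ^ (n+1) / ((n:ℝ)+1))) =
      fun n : ℕ => x ^ (n+1) / (2 * ((n:ℝ)+1)) := by
    funext n
    have : ((n:ℝ)+1) ≠ 0 := by positivity
    field_simp
  rw [h1] at H
  convert H using 1
  · rfl
  ring

lemma log_cosh_eq (β : ℝ) :
    Real.log (Real.cosh β) = -(1/2) * Real.log (1 - Real.tanh β ^ 2) := by
  have hc := Real.cosh_pos β
  have h : 1 - Real.tanh β ^ 2 = ((Real.cosh β)⁻¹) ^ 2 := by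
    rw [Real.tanh_eq_sinh_div_cosh, div_pow, inv_pow]
    have h2 := Real.cosh_sq_sub_sinh_sq β
    field_simp
    linarith
  rw [h, Real.log_pow, Real.log_inv]
  push_cast
  ring

lemma hasSum_config (β ω : ℝ) (hω : |ω| ≤ 1) :
    HasSum (fun n : ℕ => Real.tanh β ^ (2*(n+1)) / (2 * ((n:ℝ)+1)) * (1 - ω ^ (2*(n+1))))
      (Real.log (Real.cosh β) + (1/2) * Real.log (1 - Real.tanh β ^ 2 * ω ^ 2)) := by
  set θ := Real.tanh β with hθdef
  have hθ : |θ| < 1 := abs_tanh_lt_one β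
  have h1 : |θ^2| < 1 := by
    rw [abs_pow]
    exact pow_lt_one₀ (abs_nonneg _) hθ (by norm_num)
  have h2 : |θ^2 * ω^2| < 1 := by
    rw [abs_mul]
    calc |θ^2| * |ω^2| ≤ |θ^2| * 1 := by
          apply mul_le_mul_of_nonneg_left _ (abs_nonneg _)
          rw [abs_pow]
          exact pow_le_one₀ (abs_nonneg _) hω
      _ < 1 := by rw [mul_one]; exact h1
  have A := hasSum_log_half h1
  have B := hasSum_log_half h2
  have H := A.sub B
  have hterm : (fun n : ℕ => (θ^2) ^ (n+1) / (2 * ((n:ℝ)+1))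
      - (θ^2 * ω^2) ^ (n+1) / (2 * ((n:ℝ)+1)))
      = fun n : ℕ => θ ^ (2*(n+1)) / (2 * ((n:ℝ)+1)) * (1 - ω ^ (2*(n+1))) := by
    funext n
    rw [mul_pow, ← pow_mul, ← pow_mul]
    have : ((n:ℝ)+1) ≠ 0 := by positivity
    field_simp
  rw [hterm] at H
  convert H using 1
  · rfl
  rw [log_cosh_eq β, ← hθdef]
  ring

lemma key_sum_bool (N p : ℕ) (β : ℝ) (i j : Fin p → Fin N) (J : Fin p → Bool)
    (a b : Fin N) (k L1 L2 : ℝ) :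
    (∑ s : Bool, (k * (L1 + L2 + Real.log (1 + Real.tanh β * spin s * gibbsCorr N p β i j J a b))))
      = 2*(k*L1) + 2*(k*L2) + k * Real.log (1 - Real.tanh β ^ 2 * gibbsCorr N p β i j J a b ^ 2) := by
  set ω := gibbsCorr N p β i j J a b with hω
  set θ := Real.tanh β with hθ
  have h1 : 0 < 1 + θ * ω := by
    have := one_add_corr_pos N p β i j J a b true
    simpa [spin, ← hω, ← hθ] using this
  have h2 : 0 < 1 - θ * ω := by
    have := one_add_corr_pos N p β i j J a b false
    have e : θ * spin false * ω = -(θ * ω) := by simp [spin]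
    rw [e] at this
    linarith
  rw [Fintype.sum_bool]
  have et : θ * spin true * ω = θ * ω := by simp [spin]
  have ef : θ * spin false * ω = -(θ * ω) := by simp [spin]
  rw [et, ef]
  have hlog : Real.log (1 + θ * ω) + Real.log (1 - θ * ω) = Real.log (1 - θ^2 * ω^2) := by
    rw [← Real.log_mul h1.ne' h2.ne']
    congr 1
    ring
  have e2 : (1 : ℝ) + -(θ * ω) = 1 - θ * ω := by ring
  rw [e2]
  linear_combination k * hlog

lemma step_a (N p : ℕ) (hN : 1 ≤ N) (β : ℝ) :
    avgF N (p+1) (fun i j J => (1/(N:ℝ)) * Real.log (partitionZ N (p+1) β i j J))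
      = (1/(N:ℝ)) * Real.log (Real.cosh β)
        + avgF N p (fun i j J => (1/(N:ℝ)) * Real.log (partitionZ N p β i j J))
        + avgF N p (fun i j J => (1/(N:ℝ)) * ((1/(N:ℝ)^2) * ∑ a : Fin N, ∑ b : Fin N,
            (1/2) * Real.log (1 - Real.tanh β ^ 2 * gibbsCorr N p β i j J a b ^ 2))) := by
  have hNpos : (0:ℝ) < N := by exact_mod_cast hN
  have hNne : (N:ℝ) ≠ 0 := hNpos.ne'
  rw [avgF_succ N p hN]
  have hpt : ∀ (i j : Fin p → Fin N) (J : Fin p → Bool),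
      (1 / (2 * (N:ℝ)^2)) * ∑ a : Fin N, ∑ b : Fin N, ∑ s : Bool,
        ((1/(N:ℝ)) * Real.log (partitionZ N (p+1) β (Fin.cons a i) (Fin.cons b j) (Fin.cons s J)))
      = ((1/(N:ℝ)) * Real.log (Real.cosh β)
          + (1/(N:ℝ)) * Real.log (partitionZ N p β i j J))
        + (1/(N:ℝ)) * ((1/(N:ℝ)^2) * ∑ a : Fin N, ∑ b : Fin N,
            (1/2) * Real.log (1 - Real.tanh β ^ 2 * gibbsCorr N p β i j J a b ^ 2)) := by
    intro i j J
    have hsum : ∀ (a b : Fin N), ∑ s : Bool,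
        ((1/(N:ℝ)) * Real.log (partitionZ N (p+1) β (Fin.cons a i) (Fin.cons b j) (Fin.cons s J)))
        = 2*((1/(N:ℝ))*Real.log (Real.cosh β)) + 2*((1/(N:ℝ))*Real.log (partitionZ N p β i j J))
          + (1/(N:ℝ)) * Real.log (1 - Real.tanh β ^ 2 * gibbsCorr N p β i j J a b ^ 2) := by
      intro a b
      have h : ∀ s : Bool,
          (1/(N:ℝ)) * Real.log (partitionZ N (p+1) β (Fin.cons a i) (Fin.cons b j) (Fin.cons s J))
          = (1/(N:ℝ)) * (Real.log (Real.cosh β) + Real.log (partitionZ N p β i j J)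
              + Real.log (1 + Real.tanh β * spin s * gibbsCorr N p β i j J a b)) := by
        intro s; rw [log_partitionZ_cons]
      rw [Finset.sum_congr rfl fun s _ => h s]
      have := key_sum_bool N p β i j J a b (1/(N:ℝ))
        (Real.log (Real.cosh β)) (Real.log (partitionZ N p β i j J))
      rw [this]
    rw [Finset.sum_congr rfl fun a _ => Finset.sum_congr rfl fun b _ => hsum a b]
    simp only [Finset.sum_add_distrib, Finset.sum_const, Finset.card_univ, Fintype.card_fin,
      nsmul_eq_mul]
    have hpull : ∀ (g : Fin N → Fin N → ℝ), ∑ a : Fin N, ∑ b : Fin N, (1/(N:ℝ)) * g a b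
        = (1/(N:ℝ)) * ∑ a : Fin N, ∑ b : Fin N, g a b := by
      intro g; simp_rw [← Finset.mul_sum]
    rw [hpull (fun a b => Real.log (1 - Real.tanh β ^ 2 * gibbsCorr N p β i j J a b ^ 2))]
    have hpull2 : ∑ a : Fin N, ∑ b : Fin N,
        (1/2) * Real.log (1 - Real.tanh β ^ 2 * gibbsCorr N p β i j J a b ^ 2)
        = (1/2) * ∑ a : Fin N, ∑ b : Fin N,
            Real.log (1 - Real.tanh β ^ 2 * gibbsCorr N p β i j J a b ^ 2) := by
      simp_rw [← Finset.mul_sum]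
    rw [hpull2]
    field_simp
  rw [show (fun (i j : Fin p → Fin N) (J : Fin p → Bool) =>
      (1 / (2 * (N:ℝ)^2)) * ∑ a : Fin N, ∑ b : Fin N, ∑ s : Bool,
        ((fun i' j' J' => (1/(N:ℝ)) * Real.log (partitionZ N (p+1) β i' j' J'))
          (Fin.cons a i) (Fin.cons b j) (Fin.cons s J)))
      = fun i j J => ((1/(N:ℝ)) * Real.log (Real.cosh β)
          + (1/(N:ℝ)) * Real.log (partitionZ N p β i j J))
        + (1/(N:ℝ)) * ((1/(N:ℝ)^2) * ∑ a : Fin N, ∑ b : Fin N,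
            (1/2) * Real.log (1 - Real.tanh β ^ 2 * gibbsCorr N p β i j J a b ^ 2))
    from funext fun i => funext fun j => funext fun J => hpt i j J]
  rw [avgF_add, avgF_add, avgF_const N p hN]
lemma sq_pow_summable (R : ℝ) (hR : 0 ≤ R) :
    Summable (fun p : ℕ => ((p:ℝ)+1)^2 * R^p / (Nat.factorial p : ℝ)) := by
  apply Summable.of_nonneg_of_le (fun p => by positivity) (fun p => ?_)
    ((Real.summable_pow_div_factorial (4*R)).mul_left 4)
  have h1 : ((p:ℝ)+1) ≤ 2^(p+1) := by
    have := Nat.lt_two_pow_self (n := p+1)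
    exact_mod_cast this.le.trans (le_refl _)
  have h2 : ((p:ℝ)+1)^2 ≤ 4 * 4^p := by
    calc ((p:ℝ)+1)^2 ≤ ((2:ℝ)^(p+1))^2 := by
          apply pow_le_pow_left₀ (by positivity) h1
      _ = 4 * 4^p := by
          rw [← pow_mul]
          have : (p+1)*2 = 2*p+2 := by ring
          rw [this, pow_add, pow_mul]
          norm_num
          ring
  have h3 : ((p:ℝ)+1)^2 * R^p ≤ 4 * (4*R)^p := by
    calc ((p:ℝ)+1)^2 * R^p ≤ (4 * 4^p) * R^p :=
          mul_le_mul_of_nonneg_right h2 (by positivity)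
      _ = 4 * (4*R)^p := by rw [mul_pow]; ring
  have hf : (0:ℝ) < (Nat.factorial p : ℝ) := by exact_mod_cast Nat.factorial_pos p
  calc ((p:ℝ)+1)^2 * R^p / (Nat.factorial p : ℝ) ≤ 4 * (4*R)^p / (Nat.factorial p : ℝ) := by
        gcongr
    _ = 4 * ((4*R)^p / (Nat.factorial p : ℝ)) := by ring

lemma hasDerivAt_poisson (c : ℝ) (hc : 0 < c) (a : ℕ → ℝ) (C : ℝ) (hC : 0 ≤ C)
    (ha : ∀ p, |a p| ≤ C * ((p:ℝ)+1)) (α : ℝ) (hα : 0 < α) :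
    HasDerivAt (fun x : ℝ => ∑' p : ℕ, Real.exp (-(x*c)) * (x*c)^p / (Nat.factorial p : ℝ) * a p)
      (c * ∑' p : ℕ, Real.exp (-(α*c)) * (α*c)^p / (Nat.factorial p : ℝ) * (a (p+1) - a p)) α := by
  have hfac : ∀ p : ℕ, (0:ℝ) < (Nat.factorial p : ℝ) := fun p => by
    exact_mod_cast Nat.factorial_pos p
  set R : ℝ := 1 + (α+1)*c with hRdef
  have hR1 : 1 ≤ R := by nlinarith
  have hR0 : 0 ≤ R := by linarith
  set g' : ℕ → ℝ → ℝ := fun p x =>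
    (Real.exp (-(x*c)) * (-c) * (x*c)^p + Real.exp (-(x*c)) * ((p:ℝ) * (x*c)^(p-1) * c))
      / (Nat.factorial p : ℝ) * a p with hg'def
  have hderiv : ∀ (p : ℕ) (x : ℝ), HasDerivAt
      (fun y => Real.exp (-(y*c)) * (y*c)^p / (Nat.factorial p : ℝ) * a p) (g' p x) x := by
    intro p x
    have h1 : HasDerivAt (fun y : ℝ => y * c) c x := hasDerivAt_mul_const c
    have h2 : HasDerivAt (fun y : ℝ => Real.exp (-(y*c))) (Real.exp (-(x*c)) * (-c)) x := by
      have h0 : HasDerivAt (fun y : ℝ => -(y*c)) (-c) x := h1.neg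
      exact h0.exp
    have h3 : HasDerivAt (fun y : ℝ => (y*c)^p) ((p:ℝ) * (x*c)^(p-1) * c) x := h1.pow p
    exact ((h2.mul h3).div_const ((Nat.factorial p : ℝ))).mul_const (a p)
  set u : ℕ → ℝ := fun p => (2 * C * c) * (((p:ℝ)+1)^2 * R^p / (Nat.factorial p : ℝ)) with hudef
  have hu : Summable u := (sq_pow_summable R hR0).mul_left _
  have habs : ∀ (p : ℕ) (y : ℝ), 0 ≤ y →
      |g' p y| ≤ |Real.exp (-(y*c))| * ((c * (y*c)^p + (p:ℝ) * (y*c)^(p-1) * c)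
        / (Nat.factorial p : ℝ)) * |a p| := by
    intro p y hy
    have hyc : 0 ≤ y * c := mul_nonneg hy hc.le
    rw [hg'def]
    simp only []
    rw [abs_mul, abs_div]
    rw [abs_of_pos (hfac p)]
    have htri : |Real.exp (-(y*c)) * (-c) * (y*c)^p
        + Real.exp (-(y*c)) * ((p:ℝ) * (y*c)^(p-1) * c)|
        ≤ |Real.exp (-(y*c))| * (c * (y*c)^p + (p:ℝ) * (y*c)^(p-1) * c) := by
      calc |Real.exp (-(y*c)) * (-c) * (y*c)^p
          + Real.exp (-(y*c)) * ((p:ℝ) * (y*c)^(p-1) * c)|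
          ≤ |Real.exp (-(y*c)) * (-c) * (y*c)^p|
            + |Real.exp (-(y*c)) * ((p:ℝ) * (y*c)^(p-1) * c)| := abs_add_le _ _
        _ = |Real.exp (-(y*c))| * (c * (y*c)^p)
            + |Real.exp (-(y*c))| * ((p:ℝ) * (y*c)^(p-1) * c) := by
            rw [abs_mul, abs_mul, abs_mul, abs_neg, abs_of_pos hc,
              abs_of_nonneg (pow_nonneg hyc p),
              abs_of_nonneg (by positivity : (0:ℝ) ≤ (p:ℝ) * (y*c)^(p-1) * c)]
            ring
        _ = |Real.exp (-(y*c))| * (c * (y*c)^p + (p:ℝ) * (y*c)^(p-1) * c) := by ring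
    rw [← mul_div_assoc]
    exact mul_le_mul_of_nonneg_right
      ((div_le_div_iff_of_pos_right (hfac p)).mpr htri) (abs_nonneg _)
  have hbound : ∀ (p : ℕ), ∀ y ∈ Set.Ioo (0:ℝ) (α+1), ‖g' p y‖ ≤ u p := by
    intro p y hy
    obtain ⟨hy0, hy1⟩ := hy
    have hyc0 : 0 ≤ y * c := mul_nonneg hy0.le hc.le
    have hycR : y * c ≤ R := by nlinarith
    have hexp : |Real.exp (-(y*c))| ≤ 1 := by
      rw [abs_of_pos (Real.exp_pos _), ← Real.exp_zero]
      exact Real.exp_le_exp.mpr (by nlinarith)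
    have hpow : (y*c)^p ≤ R^p := pow_le_pow_left₀ hyc0 hycR p
    have hpow1 : (y*c)^(p-1) ≤ R^p :=
      (pow_le_pow_left₀ hyc0 hycR _).trans (pow_le_pow_right₀ hR1 (Nat.sub_le p 1))
    rw [Real.norm_eq_abs]
    calc |g' p y| ≤ |Real.exp (-(y*c))| * ((c * (y*c)^p + (p:ℝ) * (y*c)^(p-1) * c)
          / (Nat.factorial p : ℝ)) * |a p| := habs p y hy0.le
      _ ≤ 1 * ((c * R^p + (p:ℝ) * R^p * c) / (Nat.factorial p : ℝ)) * (C * ((p:ℝ)+1)) := by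
          apply mul_le_mul _ (ha p) (abs_nonneg _) (by positivity)
          apply mul_le_mul hexp _ (by positivity) zero_le_one
          apply (div_le_div_iff_of_pos_right (hfac p)).mpr _
          have h1 : (p:ℝ) * (y*c)^(p-1) * c ≤ (p:ℝ) * R^p * c := by
            apply mul_le_mul_of_nonneg_right _ hc.le
            exact mul_le_mul_of_nonneg_left hpow1 (Nat.cast_nonneg p)
          nlinarith [mul_le_mul_of_nonneg_left hpow hc.le]
      _ ≤ u p := by
          rw [hudef]
          have key : ((p:ℝ)+1)*((p:ℝ)+1) ≤ 2*((p:ℝ)+1)^2 := by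
            nlinarith [Nat.cast_nonneg (α := ℝ) p]
          have hnn : (0:ℝ) ≤ C*c*(R^p/(Nat.factorial p : ℝ)) := by positivity
          calc 1 * ((c * R^p + (p:ℝ) * R^p * c) / (Nat.factorial p : ℝ)) * (C * ((p:ℝ)+1))
              = (C*c*(R^p/(Nat.factorial p : ℝ))) * (((p:ℝ)+1)*((p:ℝ)+1)) := by ring
            _ ≤ (C*c*(R^p/(Nat.factorial p : ℝ))) * (2*((p:ℝ)+1)^2) :=
                mul_le_mul_of_nonneg_left key hnn
            _ = (2 * C * c) * (((p:ℝ)+1)^2 * R^p / (Nat.factorial p : ℝ)) := by ring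
  have hg0 : Summable (fun p : ℕ =>
      Real.exp (-(α*c)) * (α*c)^p / (Nat.factorial p : ℝ) * a p) := by
    apply Summable.of_norm_bounded ((sq_pow_summable (α*c) (by positivity)).mul_left C)
    intro p
    rw [Real.norm_eq_abs, abs_mul, abs_div, abs_of_pos (hfac p), abs_mul,
      abs_of_pos (Real.exp_pos _), abs_of_nonneg (pow_nonneg (by positivity) p)]
    have hexp : Real.exp (-(α*c)) ≤ 1 := by
      rw [← Real.exp_zero]; exact Real.exp_le_exp.mpr (by nlinarith)
    calc Real.exp (-(α*c)) * (α*c)^p / (Nat.factorial p : ℝ) * |a p|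
        ≤ 1 * (α*c)^p / (Nat.factorial p : ℝ) * (C * ((p:ℝ)+1)) := by
          apply mul_le_mul _ (ha p) (abs_nonneg _) (by positivity)
          apply (div_le_div_iff_of_pos_right (hfac p)).mpr _
          exact mul_le_mul_of_nonneg_right hexp (pow_nonneg (by positivity) p)
      _ ≤ C * (((p:ℝ)+1)^2 * (α*c)^p / (Nat.factorial p : ℝ)) := by
          rw [one_mul]
          have h1 : ((p:ℝ)+1) ≤ ((p:ℝ)+1)^2 := by nlinarith [Nat.cast_nonneg (α := ℝ) p]
          calc (α*c)^p / (Nat.factorial p : ℝ) * (C * ((p:ℝ)+1))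
              ≤ (α*c)^p / (Nat.factorial p : ℝ) * (C * ((p:ℝ)+1)^2) := by
                apply mul_le_mul_of_nonneg_left _ (by positivity)
                exact mul_le_mul_of_nonneg_left h1 hC
            _ = C * (((p:ℝ)+1)^2 * (α*c)^p / (Nat.factorial p : ℝ)) := by ring
  have hmem : α ∈ Set.Ioo (0:ℝ) (α+1) := ⟨hα, by linarith⟩
  have H := hasDerivAt_tsum_of_isPreconnected hu isOpen_Ioo isPreconnected_Ioo
    (fun p y _ => hderiv p y) hbound hmem hg0 hmem
  have hval : ∑' p, g' p α
      = c * ∑' p : ℕ, Real.exp (-(α*c)) * (α*c)^p / (Nat.factorial p : ℝ) * (a (p+1) - a p) := by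
    have hl0 : (0:ℝ) ≤ α * c := by positivity
    have hE1 : Real.exp (-(α*c)) ≤ 1 := by
      rw [← Real.exp_zero]; exact Real.exp_le_exp.mpr (by nlinarith)
    have hE0 : (0:ℝ) < Real.exp (-(α*c)) := Real.exp_pos _
    have h1l : (1:ℝ) ≤ 1 + α*c := by linarith
    have hQ : (0:ℝ) ≤ 1 + α*c := by linarith
    set l := α * c with hldef
    set E := Real.exp (-(α*c)) with hEdef
    set A : ℕ → ℝ := fun p => E * (p:ℝ) * l^(p-1) / (Nat.factorial p : ℝ) * a p with hAdef
    set B : ℕ → ℝ := fun p => E * l^p / (Nat.factorial p : ℝ) * a p with hBdef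
    have hB : Summable B := hg0
    have hA : Summable A := by
      apply Summable.of_norm_bounded ((sq_pow_summable (1+l) hQ).mul_left C)
      intro p
      have hll : l^(p-1) ≤ (1+l)^p :=
        (pow_le_pow_left₀ hl0 (by linarith) _).trans (pow_le_pow_right₀ h1l (Nat.sub_le p 1))
      have hpl : (p:ℝ) * l^(p-1) ≤ ((p:ℝ)+1) * (1+l)^p :=
        mul_le_mul (by linarith) hll (pow_nonneg hl0 _) (by positivity)
      rw [Real.norm_eq_abs, hAdef]
      calc |E * (p:ℝ) * l^(p-1) / (Nat.factorial p : ℝ) * a p|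
          = E * (p:ℝ) * l^(p-1) / (Nat.factorial p : ℝ) * |a p| := by
            rw [abs_mul, abs_div, abs_of_pos (hfac p), abs_mul, abs_mul, abs_of_pos hE0,
              abs_of_nonneg (Nat.cast_nonneg p), abs_of_nonneg (pow_nonneg hl0 _)]
        _ ≤ (1 * (((p:ℝ)+1) * (1+l)^p)) / (Nat.factorial p : ℝ) * (C * ((p:ℝ)+1)) := by
            apply mul_le_mul _ (ha p) (abs_nonneg _) (by positivity)
            apply (div_le_div_iff_of_pos_right (hfac p)).mpr
            calc E * (p:ℝ) * l^(p-1) = E * ((p:ℝ) * l^(p-1)) := by ring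
              _ ≤ 1 * (((p:ℝ)+1) * (1+l)^p) := mul_le_mul hE1 hpl (by positivity) zero_le_one
        _ = C * (((p:ℝ)+1)^2 * (1+l)^p / (Nat.factorial p : ℝ)) := by ring
    have hshift : Summable (fun p : ℕ => E * l^p / (Nat.factorial p : ℝ) * a (p+1)) := by
      apply Summable.of_norm_bounded ((sq_pow_summable l hl0).mul_left (2*C))
      intro p
      have ha1 : |a (p+1)| ≤ C * ((p:ℝ)+2) := by
        have := ha (p+1); push_cast at this; linarith
      rw [Real.norm_eq_abs]
      calc |E * l^p / (Nat.factorial p : ℝ) * a (p+1)|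
          = E * l^p / (Nat.factorial p : ℝ) * |a (p+1)| := by
            rw [abs_mul, abs_div, abs_of_pos (hfac p), abs_mul, abs_of_pos hE0,
              abs_of_nonneg (pow_nonneg hl0 _)]
        _ ≤ 1 * l^p / (Nat.factorial p : ℝ) * (C * ((p:ℝ)+2)) := by
            apply mul_le_mul _ ha1 (abs_nonneg _) (by positivity)
            apply (div_le_div_iff_of_pos_right (hfac p)).mpr
            exact mul_le_mul_of_nonneg_right hE1 (pow_nonneg hl0 _)
        _ ≤ (2*C) * (((p:ℝ)+1)^2 * l^p / (Nat.factorial p : ℝ)) := by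
            have h1 : ((p:ℝ)+2) ≤ 2*((p:ℝ)+1)^2 := by
              nlinarith [Nat.cast_nonneg (α := ℝ) p]
            have hnn : (0:ℝ) ≤ l^p / (Nat.factorial p : ℝ) * C := by positivity
            calc 1 * l^p / (Nat.factorial p : ℝ) * (C * ((p:ℝ)+2))
                = (l^p / (Nat.factorial p : ℝ) * C) * ((p:ℝ)+2) := by ring
              _ ≤ (l^p / (Nat.factorial p : ℝ) * C) * (2*((p:ℝ)+1)^2) :=
                  mul_le_mul_of_nonneg_left h1 hnn
              _ = (2*C) * (((p:ℝ)+1)^2 * l^p / (Nat.factorial p : ℝ)) := by ring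
    have hsplit : ∀ p : ℕ, g' p α = c * (A p - B p) := by
      intro p
      rw [hg'def, hAdef, hBdef]
      ring
    rw [tsum_congr hsplit, tsum_mul_left]
    congr 1
    rw [Summable.tsum_sub hA hB]
    have hAeq : ∑' p, A p = ∑' p : ℕ, E * l^p / (Nat.factorial p : ℝ) * a (p+1) := by
      rw [Summable.tsum_eq_zero_add hA]
      have h0 : A 0 = 0 := by rw [hAdef]; simp
      rw [h0, zero_add]
      refine tsum_congr fun p => ?_
      rw [hAdef]
      have hfs : (Nat.factorial (p+1) : ℝ) = ((p:ℝ)+1) * (Nat.factorial p : ℝ) := by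
        rw [Nat.factorial_succ]; push_cast; ring
      have hp1 : ((p:ℝ)+1) ≠ 0 := by positivity
      show E * ((p+1 : ℕ):ℝ) * l^((p+1)-1) / (Nat.factorial (p+1) : ℝ) * a (p+1) = _
      rw [hfs, Nat.add_sub_cancel]
      push_cast
      field_simp
    rw [hAeq, ← Summable.tsum_sub hshift hB]
    exact tsum_congr fun p => by ring
  rw [hval] at H
  exact H

lemma summable_poisson (l : ℝ) :
    Summable (fun p : ℕ => Real.exp (-l) * l^p / (Nat.factorial p : ℝ)) := by
  have h := (Real.summable_pow_div_factorial l).mul_left (Real.exp (-l))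
  apply h.congr
  intro p
  rw [mul_div_assoc]

lemma tsum_poisson (l : ℝ) :
    ∑' p : ℕ, Real.exp (-l) * l^p / (Nat.factorial p : ℝ) = 1 := by
  have h1 : ∀ p : ℕ, Real.exp (-l) * l^p / (Nat.factorial p : ℝ)
      = Real.exp (-l) * (l^p / (Nat.factorial p : ℝ)) := fun p => mul_div_assoc _ _ _
  rw [tsum_congr h1, tsum_mul_left]
  have h2 : ∑' p : ℕ, l^p / (Nat.factorial p : ℝ) = Real.exp l := by
    calc ∑' p : ℕ, l^p / (Nat.factorial p : ℝ) = NormedSpace.exp l :=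
          (congrFun NormedSpace.exp_eq_tsum_div l).symm
      _ = Real.exp l := by rw [Real.exp_eq_exp_ℝ]
  rw [h2, ← Real.exp_add]
  norm_num

lemma poisson_nonneg (α c : ℝ) (hα : 0 < α) (hc : 0 < c) (p : ℕ) :
    0 ≤ Real.exp (-(α*c)) * (α*c)^p / (Nat.factorial p : ℝ) := by
  have h := mul_pos hα hc
  positivity

lemma avg2_abs_le (N : ℕ) (hN : 1 ≤ N) (g : Fin N → Fin N → ℝ) (K : ℝ)
    (h : ∀ a b, |g a b| ≤ K) :
    |(1/(N:ℝ)^2) * ∑ a : Fin N, ∑ b : Fin N, g a b| ≤ K := by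
  have hNpos : (0:ℝ) < N := by exact_mod_cast hN
  have hK : 0 ≤ K := le_trans (abs_nonneg _) (h ⟨0, hN⟩ ⟨0, hN⟩)
  have h1 : ∀ a, |∑ b : Fin N, g a b| ≤ (N:ℝ) * K := fun a => by
    have := abs_sum_le_card_mul (g a) K (h a)
    simpa using this
  have h2 : |∑ a : Fin N, ∑ b : Fin N, g a b| ≤ (N:ℝ) * ((N:ℝ) * K) := by
    have := abs_sum_le_card_mul (fun a => ∑ b : Fin N, g a b) _ h1
    simpa using this
  rw [abs_mul, abs_of_pos (by positivity : (0:ℝ) < 1/(N:ℝ)^2)]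
  calc (1/(N:ℝ)^2) * |∑ a : Fin N, ∑ b : Fin N, g a b|
      ≤ (1/(N:ℝ)^2) * ((N:ℝ) * ((N:ℝ) * K)) :=
        mul_le_mul_of_nonneg_left h2 (by positivity)
    _ = K := by field_simp

lemma theta_sq_lt_one (β : ℝ) : Real.tanh β ^ 2 < 1 := by
  rw [← sq_abs]
  exact pow_lt_one₀ (abs_nonneg _) (abs_tanh_lt_one β) two_ne_zero

lemma abs_half_log_le (β ω : ℝ) (hω : |ω| ≤ 1) :
    |(1/2) * Real.log (1 - Real.tanh β ^ 2 * ω ^ 2)|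
      ≤ (1/2) * (-Real.log (1 - Real.tanh β ^ 2)) := by
  set θ := Real.tanh β
  have h1 : θ^2 < 1 := theta_sq_lt_one β
  have h2 : (0:ℝ) ≤ θ^2 := sq_nonneg θ
  have hω2 : ω^2 ≤ 1 := by
    rw [← sq_abs]
    exact pow_le_one₀ (abs_nonneg _) hω
  have hω0 : (0:ℝ) ≤ ω^2 := sq_nonneg ω
  have h3 : θ^2 * ω^2 ≤ θ^2 := by nlinarith
  have h4 : 0 < 1 - θ^2 := by linarith
  have h5 : 0 < 1 - θ^2 * ω^2 := by nlinarith
  have h6 : Real.log (1 - θ^2 * ω^2) ≤ 0 := Real.log_nonpos (by linarith) (by nlinarith)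
  have h7 : Real.log (1 - θ^2) ≤ Real.log (1 - θ^2 * ω^2) := Real.log_le_log h4 (by linarith)
  rw [abs_mul, abs_of_pos (by norm_num : (0:ℝ) < 1/2), abs_of_nonpos h6]
  have := neg_le_neg h7
  linarith [mul_le_mul_of_nonneg_left (neg_le_neg h7) (by norm_num : (0:ℝ) ≤ 1/2)]

lemma corr_pow_le_one (N p : ℕ) (β : ℝ) (i j : Fin p → Fin N) (J : Fin p → Bool)
    (a b : Fin N) (m : ℕ) : gibbsCorr N p β i j J a b ^ m ≤ 1 := by
  have h := abs_gibbsCorr_le_one N p β i j J a b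
  calc gibbsCorr N p β i j J a b ^ m ≤ |gibbsCorr N p β i j J a b ^ m| := le_abs_self _
    _ = |gibbsCorr N p β i j J a b| ^ m := abs_pow _ _
    _ ≤ 1 := pow_le_one₀ (abs_nonneg _) h

lemma cn_nonneg (β : ℝ) (n : ℕ) : 0 ≤ Real.tanh β ^ (2*(n+1)) / (2*((n:ℝ)+1)) := by
  apply div_nonneg _ (by positivity)
  rw [pow_mul]
  positivity

lemma cn_le_half (β : ℝ) (n : ℕ) : Real.tanh β ^ (2*(n+1)) / (2*((n:ℝ)+1)) ≤ 1/2 := by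
  have h1 : Real.tanh β ^ (2*(n+1)) ≤ 1 := by
    rw [pow_mul]
    apply pow_le_one₀ (sq_nonneg _)
    nlinarith [theta_sq_lt_one β, sq_nonneg (Real.tanh β)]
  have h2 : (2:ℝ) ≤ 2*((n:ℝ)+1) := by nlinarith [Nat.cast_nonneg (α := ℝ) n]
  have hd : (0:ℝ) < 2*((n:ℝ)+1) := by positivity
  calc Real.tanh β ^ (2*(n+1)) / (2*((n:ℝ)+1)) ≤ 1 / (2*((n:ℝ)+1)) :=
        (div_le_div_iff_of_pos_right hd).mpr h1
    _ ≤ 1/2 := one_div_le_one_div_of_le (by norm_num) h2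

lemma hasSum_avg (N p : ℕ) (hN : 1 ≤ N) (β : ℝ) :
    HasSum (fun n : ℕ => avgF N p (fun i j J => (1/(N:ℝ)^2) * ∑ a : Fin N, ∑ b : Fin N,
        (Real.tanh β ^ (2*(n+1)) / (2*((n:ℝ)+1)) * (1 - gibbsCorr N p β i j J a b ^ (2*(n+1))))))
      (Real.log (Real.cosh β) + avgF N p (fun i j J => (1/(N:ℝ)^2) * ∑ a : Fin N, ∑ b : Fin N,
        (1/2) * Real.log (1 - Real.tanh β ^ 2 * gibbsCorr N p β i j J a b ^ 2))) := by
  have hNpos : (0:ℝ) < N := by exact_mod_cast hN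
  have hNne : (N:ℝ) ≠ 0 := hNpos.ne'
  have hij : ∀ (i j : Fin p → Fin N) (J : Fin p → Bool),
      HasSum (fun n : ℕ => (1/(N:ℝ)^2) * ∑ a : Fin N, ∑ b : Fin N,
          (Real.tanh β ^ (2*(n+1)) / (2*((n:ℝ)+1)) * (1 - gibbsCorr N p β i j J a b ^ (2*(n+1)))))
        (Real.log (Real.cosh β) + (1/(N:ℝ)^2) * ∑ a : Fin N, ∑ b : Fin N,
          (1/2) * Real.log (1 - Real.tanh β ^ 2 * gibbsCorr N p β i j J a b ^ 2)) := by
    intro i j J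
    have h1 : HasSum (fun n : ℕ => ∑ a : Fin N, ∑ b : Fin N,
        (Real.tanh β ^ (2*(n+1)) / (2*((n:ℝ)+1)) * (1 - gibbsCorr N p β i j J a b ^ (2*(n+1)))))
        (∑ a : Fin N, ∑ b : Fin N, (Real.log (Real.cosh β)
          + (1/2) * Real.log (1 - Real.tanh β ^ 2 * gibbsCorr N p β i j J a b ^ 2))) := by
      apply hasSum_sum
      intro a _
      apply hasSum_sum
      intro b _
      exact hasSum_config β _ (abs_gibbsCorr_le_one N p β i j J a b)
    have h2 := h1.mul_left (1/(N:ℝ)^2)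
    have h3 : (1/(N:ℝ)^2) * (∑ a : Fin N, ∑ b : Fin N, (Real.log (Real.cosh β)
          + (1/2) * Real.log (1 - Real.tanh β ^ 2 * gibbsCorr N p β i j J a b ^ 2)))
        = Real.log (Real.cosh β) + (1/(N:ℝ)^2) * ∑ a : Fin N, ∑ b : Fin N,
          (1/2) * Real.log (1 - Real.tanh β ^ 2 * gibbsCorr N p β i j J a b ^ 2) := by
      have h4 : ∑ a : Fin N, ∑ b : Fin N, (Real.log (Real.cosh β)
          + (1/2) * Real.log (1 - Real.tanh β ^ 2 * gibbsCorr N p β i j J a b ^ 2))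
          = (N:ℝ)^2 * Real.log (Real.cosh β) + ∑ a : Fin N, ∑ b : Fin N,
            (1/2) * Real.log (1 - Real.tanh β ^ 2 * gibbsCorr N p β i j J a b ^ 2) := by
        simp only [Finset.sum_add_distrib, Finset.sum_const, Finset.card_univ,
          Fintype.card_fin, nsmul_eq_mul]
        ring
      rw [h4]
      field_simp
    rw [h3] at h2
    exact h2
  have hfull : HasSum (fun n : ℕ => (∑ i : Fin p → Fin N, ∑ j : Fin p → Fin N,
      ∑ J : Fin p → Bool, (1/(N:ℝ)^2) * ∑ a : Fin N, ∑ b : Fin N,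
        (Real.tanh β ^ (2*(n+1)) / (2*((n:ℝ)+1)) * (1 - gibbsCorr N p β i j J a b ^ (2*(n+1)))))
        / ((N:ℝ)^p * (N:ℝ)^p * 2^p))
      ((∑ i : Fin p → Fin N, ∑ j : Fin p → Fin N, ∑ J : Fin p → Bool,
        (Real.log (Real.cosh β) + (1/(N:ℝ)^2) * ∑ a : Fin N, ∑ b : Fin N,
          (1/2) * Real.log (1 - Real.tanh β ^ 2 * gibbsCorr N p β i j J a b ^ 2)))
        / ((N:ℝ)^p * (N:ℝ)^p * 2^p)) := by
    apply HasSum.div_const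
    apply hasSum_sum
    intro i _
    apply hasSum_sum
    intro j _
    apply hasSum_sum
    intro J _
    exact hij i j J
  have heq : avgF N p (fun i j J => (Real.log (Real.cosh β) + (1/(N:ℝ)^2) * ∑ a : Fin N,
      ∑ b : Fin N, (1/2) * Real.log (1 - Real.tanh β ^ 2 * gibbsCorr N p β i j J a b ^ 2)))
      = Real.log (Real.cosh β) + avgF N p (fun i j J => (1/(N:ℝ)^2) * ∑ a : Fin N, ∑ b : Fin N,
        (1/2) * Real.log (1 - Real.tanh β ^ 2 * gibbsCorr N p β i j J a b ^ 2)) := by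
    rw [avgF_add, avgF_const N p hN]
  rw [← heq]
  exact hfull
def poissonW (l : ℝ) (p : ℕ) : ℝ := Real.exp (-l) * l^p / (Nat.factorial p : ℝ)

def Wf (N p : ℕ) (β : ℝ) : (Fin p → Fin N) → (Fin p → Fin N) → (Fin p → Bool) → ℝ :=
  fun i j J => (1/(N:ℝ)^2) * ∑ a : Fin N, ∑ b : Fin N,
    (1/2) * Real.log (1 - Real.tanh β ^ 2 * gibbsCorr N p β i j J a b ^ 2)

def Vf (N p : ℕ) (β : ℝ) (n : ℕ) : (Fin p → Fin N) → (Fin p → Fin N) → (Fin p → Bool) → ℝ :=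
  fun i j J => (1/(N:ℝ)^2) * ∑ a : Fin N, ∑ b : Fin N,
    (Real.tanh β ^ (2*(n+1)) / (2*((n:ℝ)+1)) * (1 - gibbsCorr N p β i j J a b ^ (2*(n+1))))

def Uf (N p : ℕ) (β : ℝ) (n : ℕ) : (Fin p → Fin N) → (Fin p → Fin N) → (Fin p → Bool) → ℝ :=
  fun i j J => (1/(N:ℝ)^2) * ∑ a : Fin N, ∑ b : Fin N, gibbsCorr N p β i j J a b ^ (2*(n+1))

lemma avgF_sub (N p : ℕ) (F G : (Fin p → Fin N) → (Fin p → Fin N) → (Fin p → Bool) → ℝ) :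
    avgF N p (fun i j J => F i j J - G i j J) = avgF N p F - avgF N p G := by
  rw [avgF, avgF, avgF, ← sub_div]
  congr 1
  rw [← Finset.sum_sub_distrib]
  refine Finset.sum_congr rfl fun i _ => ?_
  rw [← Finset.sum_sub_distrib]
  refine Finset.sum_congr rfl fun j _ => ?_
  rw [← Finset.sum_sub_distrib]

lemma step_a2 (N p : ℕ) (hN : 1 ≤ N) (β : ℝ) :
    (N:ℝ) * (avgF N (p+1) (fun i j J => (1/(N:ℝ)) * Real.log (partitionZ N (p+1) β i j J))
      - avgF N p (fun i j J => (1/(N:ℝ)) * Real.log (partitionZ N p β i j J)))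
    = Real.log (Real.cosh β) + avgF N p (Wf N p β) := by
  have hNpos : (0:ℝ) < N := by exact_mod_cast hN
  have hNne : (N:ℝ) ≠ 0 := hNpos.ne'
  have h0 : avgF N (p+1) (fun i j J => (1/(N:ℝ)) * Real.log (partitionZ N (p+1) β i j J))
      = (1/(N:ℝ)) * Real.log (Real.cosh β)
        + avgF N p (fun i j J => (1/(N:ℝ)) * Real.log (partitionZ N p β i j J))
        + avgF N p (fun i j J => (1/(N:ℝ)) * Wf N p β i j J) := step_a N p hN β
  have key : ∀ (L A X : ℝ), (N:ℝ) * ((1/(N:ℝ))*L + A + (1/(N:ℝ))*X - A) = L + X := by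
    intro L A X; field_simp; ring
  rw [h0, avgF_mul N p (1/(N:ℝ)) (Wf N p β)]
  exact key _ _ _

lemma Vf_eq (N p : ℕ) (hN : 1 ≤ N) (β : ℝ) (n : ℕ) :
    Vf N p β n = fun i j J => Real.tanh β ^ (2*(n+1)) / (2*((n:ℝ)+1))
      * (1 - Uf N p β n i j J) := by
  have hNpos : (0:ℝ) < N := by exact_mod_cast hN
  have hNne : (N:ℝ) ≠ 0 := hNpos.ne'
  funext i j J
  set cn := Real.tanh β ^ (2*(n+1)) / (2*((n:ℝ)+1)) with hcn
  rw [Vf, Uf]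
  have h1 : ∑ a : Fin N, ∑ b : Fin N, (cn * (1 - gibbsCorr N p β i j J a b ^ (2*(n+1))))
      = cn * ((N:ℝ)^2 - ∑ a : Fin N, ∑ b : Fin N, gibbsCorr N p β i j J a b ^ (2*(n+1))) := by
    have hpull : ∑ a : Fin N, ∑ b : Fin N, cn * gibbsCorr N p β i j J a b ^ (2*(n+1))
        = cn * ∑ a : Fin N, ∑ b : Fin N, gibbsCorr N p β i j J a b ^ (2*(n+1)) := by
      simp_rw [← Finset.mul_sum]
    simp only [mul_sub, mul_one, Finset.sum_sub_distrib, Finset.sum_const, Finset.card_univ,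
      Fintype.card_fin, nsmul_eq_mul]
    rw [hpull]
    ring
  rw [h1]
  field_simp

lemma avg_Vf (N p : ℕ) (hN : 1 ≤ N) (β : ℝ) (n : ℕ) :
    avgF N p (Vf N p β n) = Real.tanh β ^ (2*(n+1)) / (2*((n:ℝ)+1))
      * (1 - avgF N p (Uf N p β n)) := by
  rw [Vf_eq N p hN β n]
  have h2 : (fun (i j : Fin p → Fin N) (J : Fin p → Bool) =>
      Real.tanh β ^ (2*(n+1)) / (2*((n:ℝ)+1)) * (1 - Uf N p β n i j J))
      = fun i j J => Real.tanh β ^ (2*(n+1)) / (2*((n:ℝ)+1))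
        * ((fun (i j : Fin p → Fin N) (J : Fin p → Bool) => 1 - Uf N p β n i j J) i j J) := rfl
  rw [h2, avgF_mul]
  congr 1
  have h3 : (fun (i j : Fin p → Fin N) (J : Fin p → Bool) => 1 - Uf N p β n i j J)
      = fun i j J => (fun (_ _ : Fin p → Fin N) (_ : Fin p → Bool) => (1:ℝ)) i j J
        - (fun (i j : Fin p → Fin N) (J : Fin p → Bool) => Uf N p β n i j J) i j J := rfl
  rw [h3, avgF_sub, avgF_const N p hN]

lemma abs_avgF_Uf_le_one (N p : ℕ) (hN : 1 ≤ N) (β : ℝ) (n : ℕ) :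
    |avgF N p (Uf N p β n)| ≤ 1 := by
  apply avgF_abs_le N p hN _ _ ?_
  intro i j J
  rw [Uf]
  apply avg2_abs_le N hN _ _ ?_
  intro a b
  rw [abs_pow]
  exact pow_le_one₀ (abs_nonneg _) (abs_gibbsCorr_le_one N p β i j J a b)

lemma abs_avgF_Vf_le_one (N p : ℕ) (hN : 1 ≤ N) (β : ℝ) (n : ℕ) :
    |avgF N p (Vf N p β n)| ≤ 1 := by
  apply avgF_abs_le N p hN _ _ ?_
  intro i j J
  rw [Vf]
  apply avg2_abs_le N hN _ _ ?_
  intro a b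
  rw [abs_mul]
  have h1 : |Real.tanh β ^ (2*(n+1)) / (2*((n:ℝ)+1))| ≤ 1/2 := by
    rw [abs_of_nonneg (cn_nonneg β n)]
    exact cn_le_half β n
  have h2 : |1 - gibbsCorr N p β i j J a b ^ (2*(n+1))| ≤ 2 := by
    have h3 : |gibbsCorr N p β i j J a b ^ (2*(n+1))| ≤ 1 := by
      rw [abs_pow]
      exact pow_le_one₀ (abs_nonneg _) (abs_gibbsCorr_le_one N p β i j J a b)
    have := abs_le.mp h3
    rw [abs_le]
    constructor <;> linarith [this.1, this.2]
  calc |Real.tanh β ^ (2*(n+1)) / (2*((n:ℝ)+1))| * |1 - gibbsCorr N p β i j J a b ^ (2*(n+1))|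
      ≤ (1/2) * 2 := mul_le_mul h1 h2 (abs_nonneg _) (by norm_num)
    _ = 1 := by norm_num

lemma avgF_Vf_nonneg (N p : ℕ) (hN : 1 ≤ N) (β : ℝ) (n : ℕ) :
    0 ≤ avgF N p (Vf N p β n) := by
  apply avgF_nonneg N p hN
  intro i j J
  rw [Vf]
  apply mul_nonneg (by positivity)
  apply Finset.sum_nonneg
  intro x _
  apply Finset.sum_nonneg
  intro y _
  apply mul_nonneg (cn_nonneg β n)
  have := corr_pow_le_one N p β i j J x y (2*(n+1))
  linarith

lemma abs_avgF_Wf_le (N p : ℕ) (hN : 1 ≤ N) (β : ℝ) :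
    |avgF N p (Wf N p β)| ≤ (1/2) * (-Real.log (1 - Real.tanh β ^ 2)) := by
  apply avgF_abs_le N p hN _ _ ?_
  intro i j J
  rw [Wf]
  apply avg2_abs_le N hN _ _ ?_
  intro a b
  exact abs_half_log_le β _ (abs_gibbsCorr_le_one N p β i j J a b)
end VB

open VB in
set_option maxHeartbeats 1000000 in
/-- In the Viana–Bray model, for fixed `N` and `β > 0`, the quenched pressure
`α ↦ A_N(α)` is differentiable on `(0,∞)` with
`A_N'(α) = ∑_{n=1}^∞ (θ^{2n}/(2n)) (1 - ⟨q²_{1⋯2n}⟩)`, `θ = tanh β`, where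
`⟨q²_{1⋯2n}⟩` is computed with `2n` independent replicas at parameters `(N, α, β)`. -/
theorem pressure_hasDerivAt (N : ℕ) (hN : 1 ≤ N) (β : ℝ) (hβ : 0 < β) :
    ∀ α : ℝ, 0 < α →
      HasDerivAt (fun x : ℝ => pressure N β x)
        (∑' n : ℕ, Real.tanh β ^ (2 * (n + 1)) / (2 * (n + 1)) *
          (1 - overlapMoment N β α (n + 1))) α := by
  intro α hα
  have hNpos : (0:ℝ) < N := by exact_mod_cast hN
  have hNne : (N:ℝ) ≠ 0 := hNpos.ne'
  have hl2 : (0:ℝ) ≤ Real.log 2 := Real.log_nonneg (by norm_num)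
  -- coefficient bound
  have hCb : ∀ p : ℕ,
      |avgF N p (fun i j J => (1/(N:ℝ)) * Real.log (partitionZ N p β i j J))|
        ≤ (Real.log 2 + β) * ((p:ℝ)+1) := by
    intro p
    have h1 : ∀ (i : Fin p → Fin N) (j : Fin p → Fin N) (J : Fin p → Bool),
        |(1/(N:ℝ)) * Real.log (partitionZ N p β i j J)| ≤ Real.log 2 + β * p := by
      intro i j J
      rw [abs_mul, abs_of_pos (by positivity : (0:ℝ) < 1/(N:ℝ))]
      have h2 := abs_log_partitionZ_le N p hN β hβ.le i j J
      have h3 : (1:ℝ) ≤ (N:ℝ) := by exact_mod_cast hN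
      calc (1/(N:ℝ)) * |Real.log (partitionZ N p β i j J)|
          ≤ (1/(N:ℝ)) * ((N:ℝ) * Real.log 2 + β * p) :=
            mul_le_mul_of_nonneg_left h2 (by positivity)
        _ = Real.log 2 + β * (p:ℝ) / (N:ℝ) := by field_simp
        _ ≤ Real.log 2 + β * p := by
            have h4 : β * (p:ℝ) / (N:ℝ) ≤ β * (p:ℝ) :=
              div_le_self (mul_nonneg hβ.le (Nat.cast_nonneg p)) h3
            linarith
    have h5 := avgF_abs_le N p hN _ _ h1
    calc |avgF N p (fun i j J => (1/(N:ℝ)) * Real.log (partitionZ N p β i j J))|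
        ≤ Real.log 2 + β * p := h5
      _ ≤ (Real.log 2 + β) * ((p:ℝ)+1) := by nlinarith [Nat.cast_nonneg (α := ℝ) p]
  have HP := hasDerivAt_poisson (N:ℝ) hNpos
    (fun p => avgF N p (fun i j J => (1/(N:ℝ)) * Real.log (partitionZ N p β i j J)))
    (Real.log 2 + β) (by linarith) hCb α hα
  have hfun : (fun x : ℝ => pressure N β x)
      = fun x : ℝ => ∑' p : ℕ, Real.exp (-(x*(N:ℝ))) * (x*(N:ℝ))^p / (Nat.factorial p : ℝ)
          * avgF N p (fun i j J => (1/(N:ℝ)) * Real.log (partitionZ N p β i j J)) := rfl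
  -- now prove the value identity
  have hπ0 : ∀ p : ℕ, 0 ≤ poissonW (α*(N:ℝ)) p := fun p =>
    poisson_nonneg α (N:ℝ) hα hNpos p
  have hπS : Summable (fun p : ℕ => poissonW (α*(N:ℝ)) p) := summable_poisson _
  have hπ1 : ∑' p : ℕ, poissonW (α*(N:ℝ)) p = 1 := tsum_poisson _
  -- per-p HasSum over n
  have hC : ∀ p : ℕ, HasSum (fun n : ℕ => poissonW (α*(N:ℝ)) p * avgF N p (Vf N p β n))
      (poissonW (α*(N:ℝ)) p * (Real.log (Real.cosh β) + avgF N p (Wf N p β))) := fun p =>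
    (hasSum_avg N p hN β).mul_left _
  have hsum_n : ∀ p : ℕ, Summable (fun n : ℕ => poissonW (α*(N:ℝ)) p * avgF N p (Vf N p β n)) :=
    fun p => (hC p).summable
  have htsum_p : ∀ p : ℕ, ∑' n : ℕ, poissonW (α*(N:ℝ)) p * avgF N p (Vf N p β n)
      = poissonW (α*(N:ℝ)) p * (Real.log (Real.cosh β) + avgF N p (Wf N p β)) :=
    fun p => (hC p).tsum_eq
  have houter : Summable (fun p : ℕ =>
      poissonW (α*(N:ℝ)) p * (Real.log (Real.cosh β) + avgF N p (Wf N p β))) := by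
    apply Summable.of_norm_bounded
      (hπS.mul_right (|Real.log (Real.cosh β)| + (1/2) * (-Real.log (1 - Real.tanh β ^ 2))))
    intro p
    rw [Real.norm_eq_abs, abs_mul, abs_of_nonneg (hπ0 p)]
    apply mul_le_mul_of_nonneg_left _ (hπ0 p)
    calc |Real.log (Real.cosh β) + avgF N p (Wf N p β)|
        ≤ |Real.log (Real.cosh β)| + |avgF N p (Wf N p β)| := abs_add_le _ _
      _ ≤ |Real.log (Real.cosh β)| + (1/2) * (-Real.log (1 - Real.tanh β ^ 2)) := by
          linarith [abs_avgF_Wf_le N p hN β]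
  have hsum_pn : ∀ n : ℕ, Summable (fun p : ℕ =>
      poissonW (α*(N:ℝ)) p * avgF N p (Vf N p β n)) := by
    intro n
    apply Summable.of_norm_bounded hπS
    intro p
    rw [Real.norm_eq_abs, abs_mul, abs_of_nonneg (hπ0 p)]
    calc poissonW (α*(N:ℝ)) p * |avgF N p (Vf N p β n)|
        ≤ poissonW (α*(N:ℝ)) p * 1 :=
          mul_le_mul_of_nonneg_left (abs_avgF_Vf_le_one N p hN β n) (hπ0 p)
      _ = poissonW (α*(N:ℝ)) p := mul_one _
  have hprod : Summable (fun q : ℕ × ℕ =>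
      poissonW (α*(N:ℝ)) q.1 * avgF N q.1 (Vf N q.1 β q.2)) := by
    apply (summable_prod_of_nonneg
      (fun q => mul_nonneg (hπ0 q.1) (avgF_Vf_nonneg N q.1 hN β q.2))).mpr
    exact ⟨fun p => hsum_n p, houter.congr fun p => (htsum_p p).symm⟩
  have hswap : ∑' (n : ℕ) (p : ℕ), poissonW (α*(N:ℝ)) p * avgF N p (Vf N p β n)
      = ∑' (p : ℕ) (n : ℕ), poissonW (α*(N:ℝ)) p * avgF N p (Vf N p β n) :=
    Summable.tsum_comm' hprod hsum_n hsum_pn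
  -- per-n identity
  have hE3 : ∀ n : ℕ, ∑' p : ℕ, poissonW (α*(N:ℝ)) p * avgF N p (Vf N p β n)
      = Real.tanh β ^ (2*(n+1)) / (2*((n:ℝ)+1)) * (1 - overlapMoment N β α (n+1)) := by
    intro n
    have hover : overlapMoment N β α (n+1)
        = ∑' p : ℕ, poissonW (α*(N:ℝ)) p * avgF N p (Uf N p β n) := rfl
    have hsumU : Summable (fun p : ℕ => poissonW (α*(N:ℝ)) p * avgF N p (Uf N p β n)) := by
      apply Summable.of_norm_bounded hπS
      intro p
      rw [Real.norm_eq_abs, abs_mul, abs_of_nonneg (hπ0 p)]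
      calc poissonW (α*(N:ℝ)) p * |avgF N p (Uf N p β n)|
          ≤ poissonW (α*(N:ℝ)) p * 1 :=
            mul_le_mul_of_nonneg_left (abs_avgF_Uf_le_one N p hN β n) (hπ0 p)
        _ = poissonW (α*(N:ℝ)) p := mul_one _
    calc ∑' p : ℕ, poissonW (α*(N:ℝ)) p * avgF N p (Vf N p β n)
        = ∑' p : ℕ, Real.tanh β ^ (2*(n+1)) / (2*((n:ℝ)+1))
            * (poissonW (α*(N:ℝ)) p - poissonW (α*(N:ℝ)) p * avgF N p (Uf N p β n)) :=
          tsum_congr fun p => by rw [avg_Vf N p hN β n]; ring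
      _ = Real.tanh β ^ (2*(n+1)) / (2*((n:ℝ)+1))
          * ∑' p : ℕ, (poissonW (α*(N:ℝ)) p - poissonW (α*(N:ℝ)) p * avgF N p (Uf N p β n)) :=
          tsum_mul_left
      _ = Real.tanh β ^ (2*(n+1)) / (2*((n:ℝ)+1))
          * ((∑' p : ℕ, poissonW (α*(N:ℝ)) p)
            - ∑' p : ℕ, poissonW (α*(N:ℝ)) p * avgF N p (Uf N p β n)) := by
          rw [Summable.tsum_sub hπS hsumU]
      _ = Real.tanh β ^ (2*(n+1)) / (2*((n:ℝ)+1)) * (1 - overlapMoment N β α (n+1)) := by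
          rw [hπ1, hover]
  -- E1
  have hE1 : (N:ℝ) * ∑' p : ℕ, Real.exp (-(α*(N:ℝ))) * (α*(N:ℝ))^p / (Nat.factorial p : ℝ)
      * (avgF N (p+1) (fun i j J => (1/(N:ℝ)) * Real.log (partitionZ N (p+1) β i j J))
        - avgF N p (fun i j J => (1/(N:ℝ)) * Real.log (partitionZ N p β i j J)))
      = ∑' p : ℕ, poissonW (α*(N:ℝ)) p
          * (Real.log (Real.cosh β) + avgF N p (Wf N p β)) := by
    rw [← tsum_mul_left]
    refine tsum_congr fun p => ?_
    have hs := step_a2 N p hN β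
    calc (N:ℝ) * (Real.exp (-(α*(N:ℝ))) * (α*(N:ℝ))^p / (Nat.factorial p : ℝ)
          * (avgF N (p+1) (fun i j J => (1/(N:ℝ)) * Real.log (partitionZ N (p+1) β i j J))
            - avgF N p (fun i j J => (1/(N:ℝ)) * Real.log (partitionZ N p β i j J))))
        = Real.exp (-(α*(N:ℝ))) * (α*(N:ℝ))^p / (Nat.factorial p : ℝ)
          * ((N:ℝ) * (avgF N (p+1) (fun i j J => (1/(N:ℝ)) * Real.log (partitionZ N (p+1) β i j J))
            - avgF N p (fun i j J => (1/(N:ℝ)) * Real.log (partitionZ N p β i j J)))) := by ring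
      _ = poissonW (α*(N:ℝ)) p * (Real.log (Real.cosh β) + avgF N p (Wf N p β)) := by
          rw [hs]
          rfl
  -- final chain
  have hval : (∑' n : ℕ, Real.tanh β ^ (2 * (n + 1)) / (2 * (n + 1)) *
      (1 - overlapMoment N β α (n + 1)))
      = (N:ℝ) * ∑' p : ℕ, Real.exp (-(α*(N:ℝ))) * (α*(N:ℝ))^p / (Nat.factorial p : ℝ)
        * (avgF N (p+1) (fun i j J => (1/(N:ℝ)) * Real.log (partitionZ N (p+1) β i j J))
          - avgF N p (fun i j J => (1/(N:ℝ)) * Real.log (partitionZ N p β i j J))) := by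
   calc ∑' n : ℕ, Real.tanh β ^ (2 * (n + 1)) / (2 * (n + 1)) * (1 - overlapMoment N β α (n + 1))
      = ∑' (n : ℕ) (p : ℕ), poissonW (α*(N:ℝ)) p * avgF N p (Vf N p β n) :=
        tsum_congr fun n => (hE3 n).symm
    _ = ∑' (p : ℕ) (n : ℕ), poissonW (α*(N:ℝ)) p * avgF N p (Vf N p β n) := hswap
    _ = ∑' p : ℕ, poissonW (α*(N:ℝ)) p * (Real.log (Real.cosh β) + avgF N p (Wf N p β)) :=
        tsum_congr fun p => htsum_p p
    _ = (N:ℝ) * ∑' p : ℕ, Real.exp (-(α*(N:ℝ))) * (α*(N:ℝ))^p / (Nat.factorial p : ℝ)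
        * (avgF N (p+1) (fun i j J => (1/(N:ℝ)) * Real.log (partitionZ N (p+1) β i j J))
          - avgF N p (fun i j J => (1/(N:ℝ)) * Real.log (partitionZ N p β i j J))) := hE1.symm
  rw [hfun, hval]
  exact HP

end
end

section
/- (Critical behavior of the two-replica overlap.) Let I ⊆ (1,∞) be an open interval and let f, g : I → ℝ be differentiable functions satisfying, for all τ ∈ I, the relations 2g(τ) = (τ−1) f(τ) and −(1/4)(τ−1) f′(τ) + (1/3) g′(τ) = 0. Then (τ−1) f′(τ) = 2 f(τ) for all τ ∈ I, and consequently there exists a constant C ∈ ℝ such that f(τ) = C(τ−1)² for all τ ∈ I. -/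
/-- Critical behavior of the two-replica overlap: Let `I = Ioo a b ⊆ (1,∞)`
be an open interval and `f, g : ℝ → ℝ` be differentiable on `I` (with derivatives `f', g'`)
satisfying `2 g τ = (τ - 1) * f τ` and `-(1/4)(τ-1) f' τ + (1/3) g' τ = 0` on `I`.
Then `(τ - 1) * f' τ = 2 * f τ` on `I`, and there is a constant `C` with
`f τ = C * (τ - 1)^2` on `I`. -/
theorem critical_exponent_two_replica (a b : ℝ) (ha : 1 ≤ a)
    (f g f' g' : ℝ → ℝ)
    (hf : ∀ τ ∈ Set.Ioo a b, HasDerivAt f (f' τ) τ)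
    (hg : ∀ τ ∈ Set.Ioo a b, HasDerivAt g (g' τ) τ)
    (hrel : ∀ τ ∈ Set.Ioo a b, 2 * g τ = (τ - 1) * f τ)
    (hode : ∀ τ ∈ Set.Ioo a b, -(1 / 4) * (τ - 1) * f' τ + (1 / 3) * g' τ = 0) :
    (∀ τ ∈ Set.Ioo a b, (τ - 1) * f' τ = 2 * f τ) ∧
      ∃ C : ℝ, ∀ τ ∈ Set.Ioo a b, f τ = C * (τ - 1) ^ 2 := by
  have hone : ∀ τ ∈ Set.Ioo a b, (1 : ℝ) < τ := fun τ hτ => lt_of_le_of_lt ha hτ.1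
  have key : ∀ τ ∈ Set.Ioo a b, (τ - 1) * f' τ = 2 * f τ := by
    intro τ hτ
    have hderiv : HasDerivAt (fun t => 2 * g t - (t - 1) * f t)
        (2 * g' τ - (1 * f τ + (τ - 1) * f' τ)) τ := by
      have h1 := (hg τ hτ).const_mul 2
      have h2 := (((hasDerivAt_id τ).sub_const 1).mul (hf τ hτ))
      exact h1.sub h2
    have hev : (fun t : ℝ => (0 : ℝ)) =ᶠ[nhds τ] fun t => 2 * g t - (t - 1) * f t := by
      filter_upwards [isOpen_Ioo.mem_nhds hτ] with t ht
      simp [hrel t ht]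
    have hzero : HasDerivAt (fun t => 2 * g t - (t - 1) * f t) 0 τ :=
      (hasDerivAt_const τ 0).congr_of_eventuallyEq hev.symm
    have huniq := hderiv.unique hzero
    have hode' := hode τ hτ
    nlinarith [huniq, hode']
  refine ⟨key, ?_⟩
  rcases Set.eq_empty_or_nonempty (Set.Ioo a b) with he | ⟨x₀, hx₀⟩
  · exact ⟨0, fun τ hτ => by rw [he] at hτ; exact absurd hτ (Set.notMem_empty τ)⟩
  · set h : ℝ → ℝ := fun t => f t / (t - 1) ^ 2 with hh
    have hderiv0 : ∀ τ ∈ Set.Ioo a b, HasDerivAt h 0 τ := by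
      intro τ hτ
      have hne : (τ - 1) ^ 2 ≠ 0 := pow_ne_zero _ (sub_ne_zero.mpr (hone τ hτ).ne')
      have hd : HasDerivAt (fun t : ℝ => (t - 1) ^ 2) (2 * (τ - 1)) τ := by
        exact (((hasDerivAt_id τ).sub_const 1).pow 2).congr_deriv (by simp)
      have := (hf τ hτ).div hd hne
      apply this.congr_deriv
      rw [div_eq_zero_iff]
      left
      linear_combination (τ - 1) * (key τ hτ)
    have hconst : ∀ τ ∈ Set.Ioo a b, h τ = h x₀ := by
      intro τ hτ
      apply (convex_Ioo a b).is_const_of_fderivWithin_eq_zero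
        (fun t ht => ((hderiv0 t ht).differentiableAt).differentiableWithinAt)
        ?_ hτ hx₀
      intro t ht
      have hfd : HasFDerivAt h (0 : ℝ →L[ℝ] ℝ) t := by
        have h0 : (ContinuousLinearMap.smulRight (1 : ℝ →L[ℝ] ℝ) (0 : ℝ)) = 0 := by
          ext; simp
        exact h0 ▸ (hderiv0 t ht).hasFDerivAt
      rw [hfd.hasFDerivWithinAt.fderivWithin (isOpen_Ioo.uniqueDiffOn t ht)]
    refine ⟨h x₀, fun τ hτ => ?_⟩
    have hne : (τ - 1) ^ 2 ≠ 0 := pow_ne_zero _ (sub_ne_zero.mpr (hone τ hτ).ne')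
    rw [← hconst τ hτ]
    simp only [hh]
    rw [div_mul_cancel₀ _ hne]
end
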